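/- arXiv:2012.01011 — 6 statements merged into one kernel-verified Lean document; each statement's English description precedes it below -/
import Mathlib

section
/- Let μ be a maximal individually rational matching. Then μ is Pareto efficient if and only if μ admits no improving chain and no improving cycle. (An improving chain for μ is a sequence i_1,...,i_n of distinct students together with schools such that each student in the sequence prefers the next school in the sequence to her assignment under μ, each intermediate school is filled under μ by the next student in the sequence, and the last school c_{n+1} has excess capacity under μ; an improving cycle is the analogous cyclic structure where each student takes the school vacated by the next student in the cycle, making all involved students strictly better off.) -/
open Finset
open scoped Classical

/-- A matching assigns each student a school or `none` (unassigned). -/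
abbrev Matching (I S : Type*) := I → Option S

/-- An individual strict preference over `S ∪ {∅}`: an injective utility
function on `Option S` (higher value = more preferred, `none` = being
unassigned). -/
abbrev IndPref (S : Type*) := {f : Option S → ℕ // Function.Injective f}

/-- A preference profile: one strict preference per student. -/
abbrev Prof (I S : Type*) := I → IndPref S

/-- Strict school priorities: for each school, an injective rank over
students (higher value = higher priority). -/
abbrev Prio (I S : Type*) := {p : S → I → ℕ // ∀ s, Function.Injective (p s)}

/-- A mechanism maps reported preference profiles to matchings. -/
abbrev Mechanism (I S : Type*) := Prof I S → Matching I S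

variable {I S : Type*} [Fintype I] [DecidableEq I] [Fintype S] [DecidableEq S]

/-- Capacity feasibility. -/
def Feasible (q : S → ℕ) (μ : Matching I S) : Prop :=
  ∀ s : S, (univ.filter fun i => μ i = some s).card ≤ q s

/-- Individual rationality with respect to profile `P`. -/
def IndivRational (P : Prof I S) (μ : Matching I S) : Prop :=
  ∀ i, (P i).1 none ≤ (P i).1 (μ i)

/-- Number of assigned students. -/
def msize (μ : Matching I S) : ℕ := (univ.filter fun i => μ i ≠ none).card

/-- Maximality: no feasible individually rational matching assigns strictly
more students. -/
def MaximalMatching (P : Prof I S) (q : S → ℕ) (μ : Matching I S) : Prop :=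
  ∀ μ' : Matching I S, Feasible q μ' → IndivRational P μ' → msize μ' ≤ msize μ

/-- `μ'` Pareto dominates `μ`. -/
def Dominates (P : Prof I S) (μ' μ : Matching I S) : Prop :=
  (∀ i, (P i).1 (μ i) ≤ (P i).1 (μ' i)) ∧ ∃ j, (P j).1 (μ j) < (P j).1 (μ' j)

/-- Pareto efficiency among feasible individually rational matchings. -/
def Efficient (P : Prof I S) (q : S → ℕ) (μ : Matching I S) : Prop :=
  ¬ ∃ μ', Feasible q μ' ∧ IndivRational P μ' ∧ Dominates P μ' μ

/-- Non-wastefulness. -/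
def NonWasteful (P : Prof I S) (q : S → ℕ) (μ : Matching I S) : Prop :=
  ∀ i s, (P i).1 (μ i) < (P i).1 (some s) →
    (univ.filter fun j => μ j = some s).card = q s

/-- Fairness (no justified envy). -/
def Fair (P : Prof I S) (pr : Prio I S) (μ : Matching I S) : Prop :=
  ¬ ∃ i s j, (P i).1 (μ i) < (P i).1 (some s) ∧ μ j = some s ∧ pr.1 s j < pr.1 s i

/-- Stability: individually rational, non-wasteful and fair. -/
def Stable (P : Prof I S) (pr : Prio I S) (q : S → ℕ) (μ : Matching I S) : Prop :=
  Feasible q μ ∧ IndivRational P μ ∧ NonWasteful P q μ ∧ Fair P pr μ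

/-- Fairness for unassigned students. -/
def FairForUnassigned (P : Prof I S) (pr : Prio I S) (μ : Matching I S) : Prop :=
  ¬ ∃ i s j, μ i = none ∧ (P i).1 none < (P i).1 (some s) ∧ μ j = some s ∧
    pr.1 s j < pr.1 s i

/-- `(a, t)` is an improving chain for `μ`: each student `a k` strictly
prefers `t k` to their assignment, each school `t k` (for `k < n`) is
currently occupied by the next student `a (k+1)`, and the last school has
excess capacity. -/
def IsImpChain (P : Prof I S) (q : S → ℕ) (μ : Matching I S)
    (n : ℕ) (a : Fin (n + 1) → I) (t : Fin (n + 1) → S) : Prop :=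
  Function.Injective a ∧
  (∀ k, (P (a k)).1 (μ (a k)) < (P (a k)).1 (some (t k))) ∧
  (∀ k : Fin n, μ (a k.succ) = some (t k.castSucc)) ∧
  (univ.filter fun j => μ j = some (t (Fin.last n))).card < q (t (Fin.last n))

/-- `(a, t)` is an improving cycle for `μ`: each student `a k` is assigned
to `t k` and strictly prefers the school `t (k+1)` vacated by the next
student in the cycle. -/
def IsImpCycle (P : Prof I S) (μ : Matching I S)
    (n : ℕ) (a : Fin (n + 1) → I) (t : Fin (n + 1) → S) : Prop :=
  Function.Injective a ∧
  (∀ k, μ (a k) = some (t k)) ∧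
  (∀ k, (P (a k)).1 (some (t k)) < (P (a k)).1 (some (t (k + 1))))

def HasImpChain (P : Prof I S) (q : S → ℕ) (μ : Matching I S) : Prop :=
  ∃ n a t, IsImpChain P q μ n a t

def HasImpCycle (P : Prof I S) (μ : Matching I S) : Prop :=
  ∃ n a t, IsImpCycle P μ n a t

/-- Implementing one improving chain or cycle: every student involved moves
to the school they prefer in the chain/cycle, all others keep their
assignment. -/
def ImplementStep (P : Prof I S) (q : S → ℕ) (μ μ' : Matching I S) : Prop :=
  (∃ n a t, IsImpChain P q μ n a t ∧ (∀ k, μ' (a k) = some (t k)) ∧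
    ∀ j, (∀ k, j ≠ a k) → μ' j = μ j) ∨
  (∃ n a t, IsImpCycle P μ n a t ∧ (∀ k, μ' (a k) = some (t (k + 1))) ∧
    ∀ j, (∀ k, j ≠ a k) → μ' j = μ j)

/-- One refinement step of the first stage of EAM: keep only the matchings
assigning student `i`, whenever such matchings exist. -/
noncomputable def xiStep (A : Set (Matching I S)) (i : I) : Set (Matching I S) :=
  if ∃ μ ∈ A, μ i ≠ none then {μ ∈ A | μ i ≠ none} else A

/-- The set `ξ^n` of the first stage of EAM, for the enumeration `L` of the
students, starting from all feasible individually rational matchings. -/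
noncomputable def xiList (P : Prof I S) (q : S → ℕ) (L : List I) :
    Set (Matching I S) :=
  L.foldl xiStep {μ | Feasible q μ ∧ IndivRational P μ}

/-- `μ` is a possible outcome of an EAM procedure with student enumeration
`L`: it is reachable from some matching selected in the first stage by
implementing improving chains/cycles, and admits no further improving chain
or cycle. -/
def IsEAMOutcome (P : Prof I S) (q : S → ℕ) (L : List I) (μ : Matching I S) :
    Prop :=
  ∃ μ₀ ∈ xiList P q L, Relation.ReflTransGen (ImplementStep P q) μ₀ μ ∧
    ¬ HasImpChain P q μ ∧ ¬ HasImpCycle P μ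

/-- EAM mechanisms with enumeration `L`. -/
def IsEAMMech (q : S → ℕ) (L : List I) (ψ : Mechanism I S) : Prop :=
  ∀ P, IsEAMOutcome P q L (ψ P)

/-- One sub-step of Step 2 of FAM: a pair `(i, s)` violating fairness for
unassigned students is resolved by placing `i` at `s` and unassigning the
lowest-priority student currently matched to `s`. -/
def FairStep (P : Prof I S) (pr : Prio I S) (μ μ' : Matching I S) : Prop :=
  ∃ i s j, μ i = none ∧ (P i).1 none < (P i).1 (some s) ∧ μ j = some s ∧
    pr.1 s j < pr.1 s i ∧ (∀ j', μ j' = some s → pr.1 s j ≤ pr.1 s j') ∧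
    μ' = Function.update (Function.update μ j none) i (some s)

/-- FAM mechanisms: an EAM first stage followed by iterated resolution of
violations of fairness for unassigned students. -/
def IsFAMMech (q : S → ℕ) (pr : Prio I S) (L : List I) (ψ : Mechanism I S) :
    Prop :=
  ∀ P, ∃ μ₁, IsEAMOutcome P q L μ₁ ∧
    Relation.ReflTransGen (FairStep P pr) μ₁ (ψ P) ∧
    FairForUnassigned P pr (ψ P)

/-- Individually rational mechanism (with respect to reports). -/
def IRMech (q : S → ℕ) (ψ : Mechanism I S) : Prop :=
  ∀ P, Feasible q (ψ P) ∧ IndivRational P (ψ P)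

/-- MaximalMatching mechanism. -/
def MaximalMech (q : S → ℕ) (ψ : Mechanism I S) : Prop :=
  IRMech q ψ ∧ ∀ P, MaximalMatching P q (ψ P)

/-- Nash equilibrium of the preference-reporting game induced by `ψ`, with
true preferences `u`. -/
def NashEq (u : Prof I S) (ψ : Mechanism I S) (P' : Prof I S) : Prop :=
  ∀ (i : I) (Pi'' : IndPref S),
    (u i).1 (ψ (Function.update P' i Pi'') i) ≤ (u i).1 (ψ P' i)

/-- Strategy-proofness. -/
def StrategyProof (ψ : Mechanism I S) : Prop :=
  ∀ (P : Prof I S) (i : I) (Pi' : IndPref S),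
    (P i).1 (ψ (Function.update P i Pi') i) ≤ (P i).1 (ψ P i)

/-- A maximizer of `f` on the nonempty finite set `A`. -/
noncomputable def bestOf (f : Option S → ℕ) (A : Finset (Option S))
    (h : A.Nonempty) : Option S :=
  (Finset.exists_max_image A f h).choose

/-- Serial dictatorship: students pick, in the order given, their most
preferred option among `none` and the schools with remaining capacity. -/
noncomputable def sdRun (P : Prof I S) :
    List I → (S → ℕ) → Matching I S → Matching I S
  | [], _, μ => μ
  | i :: rest, rem, μ =>
    let c := bestOf (P i).1 (insert none ((univ.filter fun s => 0 < rem s).image some))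
      (insert_nonempty _ _)
    sdRun P rest (fun s => if c = some s then rem s - 1 else rem s)
      (Function.update μ i c)

/-- The serial dictatorship outcome with ordering `L` and capacities `q`. -/
noncomputable def SD (P : Prof I S) (q : S → ℕ) (L : List I) : Matching I S :=
  sdRun P L q fun _ => none


variable {I S : Type*} [Fintype I] [DecidableEq I] [Fintype S] [DecidableEq S]

/- ===================== Auxiliary lemmas ===================== -/

section Aux

variable (P : Prof I S) (q : S → ℕ) (μ : Matching I S)

/-- Splitting the fiber count over the range of an injective family. -/
lemma count_split {m : ℕ} (a : Fin m → I) (ha : Function.Injective a)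
    (ν : Matching I S) (s : S) :
    (univ.filter fun j => ν j = some s).card
      = (univ.filter fun j => ν j = some s ∧ ∀ k, j ≠ a k).card
        + (univ.filter fun k : Fin m => ν (a k) = some s).card := by
  classical
  have hU : (univ.filter fun j => ν j = some s)
      = (univ.filter fun j => ν j = some s ∧ ∀ k, j ≠ a k)
        ∪ ((univ.filter fun k : Fin m => ν (a k) = some s).image a) := by
    ext j
    simp only [Finset.mem_union, Finset.mem_filter, Finset.mem_univ, true_and,
      Finset.mem_image]
    constructor
    · intro hj
      by_cases hx : ∃ k, a k = j
      · obtain ⟨k, rfl⟩ := hx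
        exact Or.inr ⟨k, by simpa using hj, rfl⟩
      · exact Or.inl ⟨hj, fun k hk => hx ⟨k, hk.symm⟩⟩
    · rintro (⟨h, _⟩ | ⟨k, hk, rfl⟩)
      · exact h
      · simpa using hk
  rw [hU, Finset.card_union_of_disjoint, Finset.card_image_of_injective _ ha]
  · rw [Finset.disjoint_left]
    rintro j hj hj'
    obtain ⟨k, -, rfl⟩ := Finset.mem_image.1 hj'
    exact (Finset.mem_filter.1 hj).2.2 k rfl

/-- If a matching `μ'` agrees with `μ` off the range of `a`, the fiber
counts are related by the counts over `a`. -/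
lemma implement_count {m : ℕ} (a : Fin m → I) (ha : Function.Injective a)
    (μ' : Matching I S) (hoff : ∀ j, (∀ k, j ≠ a k) → μ' j = μ j) (s : S) :
    (univ.filter fun j => μ' j = some s).card
      + (univ.filter fun k : Fin m => μ (a k) = some s).card
      = (univ.filter fun j => μ j = some s).card
        + (univ.filter fun k : Fin m => μ' (a k) = some s).card := by
  classical
  rw [count_split a ha μ' s, count_split a ha μ s]
  have hOff : (univ.filter fun j => μ' j = some s ∧ ∀ k, j ≠ a k)
      = (univ.filter fun j => μ j = some s ∧ ∀ k, j ≠ a k) := by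
    ext j
    simp only [Finset.mem_filter, Finset.mem_univ, true_and]
    constructor
    · rintro ⟨h1, h2⟩; exact ⟨(hoff j h2) ▸ h1, h2⟩
    · rintro ⟨h1, h2⟩; exact ⟨(hoff j h2).symm ▸ h1, h2⟩
  rw [hOff]; omega

/-- Implementing an improving chain contradicts efficiency. -/
lemma chain_dominates (hIR : IndivRational P μ) {n : ℕ}
    {a : Fin (n + 1) → I} {t : Fin (n + 1) → S}
    (hc : IsImpChain P q μ n a t) (hF : Feasible q μ) :
    ∃ μ', Feasible q μ' ∧ IndivRational P μ' ∧ Dominates P μ' μ := by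
  classical
  obtain ⟨hinj, hpref, hmid, hlast⟩ := hc
  set μ' : Matching I S :=
    fun j => if h : ∃ k, a k = j then some (t h.choose) else μ j with hμ'
  have hon : ∀ k, μ' (a k) = some (t k) := by
    intro k
    have h : ∃ k', a k' = a k := ⟨k, rfl⟩
    have : h.choose = k := hinj h.choose_spec
    simp only [hμ', dif_pos h, this]
  have hoff : ∀ j, (∀ k, j ≠ a k) → μ' j = μ j := by
    intro j hj
    have : ¬ ∃ k, a k = j := fun ⟨k, hk⟩ => hj k hk.symm
    simp only [hμ', dif_neg this]
  refine ⟨μ', ?_, ?_, ?_, ⟨a 0, ?_⟩⟩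
  · -- Feasible
    intro s
    have hkey := implement_count μ a hinj μ' hoff s
    have hrw : (univ.filter fun k : Fin (n+1) => μ' (a k) = some s)
        = (univ.filter fun k : Fin (n+1) => t k = s) := by
      ext k; simp [hon k]
    rw [hrw] at hkey
    -- compare card {k | t k = s} with card {k | μ (a k) = some s}
    by_cases hts : t (Fin.last n) = s
    · have hinj2 : (univ.filter fun k : Fin (n+1) => t k = s).card
          ≤ (univ.filter fun k : Fin (n+1) => μ (a k) = some s).card + 1 := by
        have hsub : (univ.filter fun k : Fin (n+1) => t k = s)
            ⊆ insert (Fin.last n)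
              ((univ.filter fun k : Fin (n+1) => t k = s).erase (Fin.last n)) := by
          intro k hk
          by_cases hkl : k = Fin.last n
          · exact Finset.mem_insert.2 (Or.inl hkl)
          · exact Finset.mem_insert.2 (Or.inr (Finset.mem_erase.2 ⟨hkl, hk⟩))
        have hle := Finset.card_le_card hsub
        have hcard : ((univ.filter fun k : Fin (n+1) => t k = s).erase
              (Fin.last n)).card
            ≤ (univ.filter fun k : Fin (n+1) => μ (a k) = some s).card := by
          refine Finset.card_le_card_of_injOn
            (fun k => k + 1) ?_ ?_
          · intro k hk
            have hk' := Finset.mem_erase.1 hk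
            have hkl : k < Fin.last n :=
              lt_of_le_of_ne (Fin.le_last k) hk'.1
            have hkv : (k : ℕ) < n := hkl
            have hseq : (⟨(k : ℕ), hkv⟩ : Fin n).succ = k + 1 := by
              apply Fin.ext
              simp [Fin.val_add_one_of_lt hkl]
            have hcs : (⟨(k : ℕ), hkv⟩ : Fin n).castSucc = k := by
              apply Fin.ext; simp
            have := hmid ⟨(k : ℕ), hkv⟩
            rw [hseq, hcs] at this
            simp only [Finset.mem_coe, Finset.mem_filter, Finset.mem_univ, true_and]
            rw [this]
            have := (Finset.mem_filter.1 hk'.2).2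
            simp [this]
          · intro x _ y _ hxy
            exact add_right_cancel hxy
        calc (univ.filter fun k : Fin (n+1) => t k = s).card
            ≤ _ := hle
          _ ≤ ((univ.filter fun k : Fin (n+1) => t k = s).erase
                (Fin.last n)).card + 1 := Finset.card_insert_le _ _
          _ ≤ _ := by omega
      have hlast' : (univ.filter fun j => μ j = some s).card < q s := by
        rw [← hts]; exact hlast
      omega
    · have hinj2 : (univ.filter fun k : Fin (n+1) => t k = s).card
          ≤ (univ.filter fun k : Fin (n+1) => μ (a k) = some s).card := by
        refine Finset.card_le_card_of_injOn (fun k => k + 1) ?_ ?_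
        · intro k hk
          have hk' := (Finset.mem_filter.1 hk).2
          have hkl : k < Fin.last n :=
            lt_of_le_of_ne (Fin.le_last k) (fun h => hts (h ▸ hk'))
          have hkv : (k : ℕ) < n := hkl
          have hseq : (⟨(k : ℕ), hkv⟩ : Fin n).succ = k + 1 := by
            apply Fin.ext
            simp [Fin.val_add_one_of_lt hkl]
          have hcs : (⟨(k : ℕ), hkv⟩ : Fin n).castSucc = k := by
            apply Fin.ext; simp
          have := hmid ⟨(k : ℕ), hkv⟩
          rw [hseq, hcs] at this
          simp only [Finset.mem_coe, Finset.mem_filter, Finset.mem_univ, true_and]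
          rw [this, hk']
        · intro x _ y _ hxy
          exact add_right_cancel hxy
      have := hF s
      omega
  · -- IR
    intro j
    by_cases hj : ∃ k, a k = j
    · obtain ⟨k, rfl⟩ := hj
      rw [hon k]
      exact le_of_lt (lt_of_le_of_lt (hIR (a k)) (hpref k))
    · rw [hoff j (fun k hk => hj ⟨k, hk.symm⟩)]; exact hIR j
  · -- weak domination
    intro j
    by_cases hj : ∃ k, a k = j
    · obtain ⟨k, rfl⟩ := hj
      rw [hon k]; exact le_of_lt (hpref k)
    · rw [hoff j (fun k hk => hj ⟨k, hk.symm⟩)]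
  · rw [hon 0]; exact hpref 0

/-- Implementing an improving cycle contradicts efficiency. -/
lemma cycle_dominates (hIR : IndivRational P μ) {n : ℕ}
    {a : Fin (n + 1) → I} {t : Fin (n + 1) → S}
    (hc : IsImpCycle P μ n a t) (hF : Feasible q μ) :
    ∃ μ', Feasible q μ' ∧ IndivRational P μ' ∧ Dominates P μ' μ := by
  classical
  obtain ⟨hinj, hass, hpref⟩ := hc
  set μ' : Matching I S :=
    fun j => if h : ∃ k, a k = j then some (t (h.choose + 1)) else μ j with hμ'
  have hon : ∀ k, μ' (a k) = some (t (k + 1)) := by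
    intro k
    have h : ∃ k', a k' = a k := ⟨k, rfl⟩
    have : h.choose = k := hinj h.choose_spec
    simp only [hμ', dif_pos h, this]
  have hoff : ∀ j, (∀ k, j ≠ a k) → μ' j = μ j := by
    intro j hj
    have : ¬ ∃ k, a k = j := fun ⟨k, hk⟩ => hj k hk.symm
    simp only [hμ', dif_neg this]
  refine ⟨μ', ?_, ?_, ?_, ⟨a 0, ?_⟩⟩
  · intro s
    have hkey := implement_count μ a hinj μ' hoff s
    have hrw1 : (univ.filter fun k : Fin (n+1) => μ' (a k) = some s)
        = (univ.filter fun k : Fin (n+1) => t (k + 1) = s) := by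
      ext k; simp [hon k]
    have hrw2 : (univ.filter fun k : Fin (n+1) => μ (a k) = some s)
        = (univ.filter fun k : Fin (n+1) => t k = s) := by
      ext k; simp [hass k]
    rw [hrw1, hrw2] at hkey
    have hbij : (univ.filter fun k : Fin (n+1) => t (k + 1) = s).card
        = (univ.filter fun k : Fin (n+1) => t k = s).card := by
      refine Finset.card_bij' (fun k _ => k + 1) (fun k _ => k - 1) ?_ ?_ ?_ ?_
      · intro k hk
        simpa using (Finset.mem_filter.1 hk).2
      · intro k hk
        simp only [Finset.mem_filter, Finset.mem_univ, true_and, sub_add_cancel]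
        exact (Finset.mem_filter.1 hk).2
      · intro k _; simp
      · intro k _; simp
    have := hF s
    omega
  · intro j
    by_cases hj : ∃ k, a k = j
    · obtain ⟨k, rfl⟩ := hj
      rw [hon k]
      refine le_of_lt (lt_of_le_of_lt (hIR (a k)) ?_)
      rw [hass k]; exact hpref k
    · rw [hoff j (fun k hk => hj ⟨k, hk.symm⟩)]; exact hIR j
  · intro j
    by_cases hj : ∃ k, a k = j
    · obtain ⟨k, rfl⟩ := hj
      rw [hon k, hass k]; exact le_of_lt (hpref k)
    · rw [hoff j (fun k hk => hj ⟨k, hk.symm⟩)]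
  · rw [hon 0, hass 0]; exact hpref 0

/-- The key induction: a partial improving chain either extends, closes
into a cycle, or terminates in an improving chain. -/
lemma extend_chain (hIR : IndivRational P μ) {μ' : Matching I S}
    (hF' : Feasible q μ')
    (hd : ∀ i, (P i).1 (μ i) ≤ (P i).1 (μ' i)) :
    ∀ (m k : ℕ) (a : Fin (k + 1) → I), Fintype.card I ≤ k + m →
      Function.Injective a → (∀ r, μ (a r) ≠ μ' (a r)) →
      (∀ r : Fin k, μ (a r.succ) = μ' (a r.castSucc)) →
      HasImpChain P q μ ∨ HasImpCycle P μ := by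
  classical
  have hsome : ∀ i, μ i ≠ μ' i → ∃ c, μ' i = some c := by
    intro i hi
    cases hc : μ' i with
    | none =>
      exfalso
      have h1 := hd i
      rw [hc] at h1
      have h2 := hIR i
      have : (P i).1 (μ i) = (P i).1 none := le_antisymm h1 h2
      have := (P i).2 this
      exact hi (this.trans hc.symm)
    | some c => exact ⟨c, rfl⟩
  have hstrict : ∀ i, μ i ≠ μ' i → (P i).1 (μ i) < (P i).1 (μ' i) := by
    intro i hi
    exact lt_of_le_of_ne (hd i) (fun h => hi ((P i).2 h))
  intro m
  induction m with
  | zero =>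
    intro k a hcard hinj _ _
    have := Fintype.card_le_of_injective a hinj
    simp at this
    omega
  | succ m ih =>
    intro k a hcard hinj hD hchain
    obtain ⟨s, hs⟩ := hsome (a (Fin.last k)) (hD _)
    by_cases hfull : (univ.filter fun j => μ j = some s).card < q s
    · -- improving chain
      left
      choose t ht using fun r => hsome (a r) (hD r)
      refine ⟨k, a, t, hinj, ?_, ?_, ?_⟩
      · intro r
        have := hstrict (a r) (hD r)
        rwa [ht r] at this
      · intro r
        rw [hchain r, ht]
      · have : t (Fin.last k) = s := by
          have := (ht (Fin.last k)).symm.trans hs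
          exact Option.some_injective _ this
        rwa [this]
    · -- school s is full under μ; find a displaced student
      push_neg at hfull
      have hex : ∃ j, μ j = some s ∧ μ' j ≠ some s := by
        by_contra hno
        push_neg at hno
        have hsub : (univ.filter fun j => μ j = some s)
            ⊆ (univ.filter fun j => μ' j = some s) := by
          intro j hj
          simp only [Finset.mem_filter, Finset.mem_univ, true_and] at hj ⊢
          exact hno j hj
        have heq := Finset.eq_of_subset_of_card_le hsub
          (le_trans (hF' s) hfull)
        have hmem : a (Fin.last k) ∈ (univ.filter fun j => μ' j = some s) := by
          simp [hs]
        rw [← heq] at hmem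
        have : μ (a (Fin.last k)) = some s :=
          (Finset.mem_filter.1 hmem).2
        exact hD (Fin.last k) (this.trans hs.symm)
      obtain ⟨j, hj1, hj2⟩ := hex
      by_cases hjr : ∃ r, a r = j
      · -- improving cycle
        right
        obtain ⟨r, hr⟩ := hjr
        set n := k - (r : ℕ) with hn
        have hrn : (r : ℕ) + n = k := by
          have := r.isLt; omega
        set b : Fin (n + 1) → I :=
          fun x => a ⟨(r : ℕ) + (x : ℕ), by have := x.isLt; omega⟩ with hb
        have hbD : ∀ x, μ (b x) ≠ μ' (b x) := fun x => hD _
        have hbinj : Function.Injective b := by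
          intro x y hxy
          have := hinj hxy
          have hv : (r : ℕ) + (x : ℕ) = (r : ℕ) + (y : ℕ) :=
            congrArg Fin.val this
          exact Fin.ext (by omega)
        have hb0 : μ (b 0) = some s := by
          have : b 0 = a r := by
            apply congrArg a; apply Fin.ext; simp [hb]
          rw [this, hr, hj1]
        have hblast : b (Fin.last n) = a (Fin.last k) := by
          apply congrArg a; apply Fin.ext
          simp [hb, hrn]
        have hbass : ∀ x : Fin (n + 1), ∃ c, μ (b x) = some c := by
          intro x
          by_cases hx0 : (x : ℕ) = 0
          · refine ⟨s, ?_⟩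
            have : x = 0 := Fin.ext (by simpa using hx0)
            rw [this]; exact hb0
          · have hxv : (r : ℕ) + (x : ℕ) - 1 < k := by
              have := x.isLt; omega
            have hsucc : (⟨(r : ℕ) + (x : ℕ) - 1, hxv⟩ : Fin k).succ
                = ⟨(r : ℕ) + (x : ℕ), by have := x.isLt; omega⟩ := by
              apply Fin.ext; simp; omega
            have := hchain ⟨(r : ℕ) + (x : ℕ) - 1, by have := x.isLt; omega⟩
            rw [hsucc] at this
            have hbx : b x = a ⟨(r : ℕ) + (x : ℕ), by have := x.isLt; omega⟩ := rfl
            rw [hbx, this]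
            exact hsome _ (hD _)
        choose t' ht' using hbass
        refine ⟨n, b, t', hbinj, ht', ?_⟩
        intro x
        have hgoal : some (t' (x + 1)) = μ' (b x) := by
          by_cases hxl : x = Fin.last n
          · subst hxl
            rw [Fin.last_add_one]
            have ht'0 : t' 0 = s :=
              Option.some_injective _ ((ht' 0).symm.trans hb0)
            rw [ht'0, hblast, hs]
          · have hxlt : x < Fin.last n := lt_of_le_of_ne (Fin.le_last x) hxl
            have hxv : (x : ℕ) < n := hxlt
            have hval : ((x + 1 : Fin (n+1)) : ℕ) = (x : ℕ) + 1 :=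
              Fin.val_add_one_of_lt hxlt
            -- b (x+1) = a ⟨r + x + 1⟩, and the chain condition applies
            have hidx : (r : ℕ) + (x : ℕ) < k := by omega
            have hsucc : (⟨(r : ℕ) + (x : ℕ), hidx⟩ : Fin k).succ
                = ⟨(r : ℕ) + ((x + 1 : Fin (n+1)) : ℕ), by omega⟩ := by
              apply Fin.ext; simp; omega
            have hcs : (⟨(r : ℕ) + (x : ℕ), hidx⟩ : Fin k).castSucc
                = ⟨(r : ℕ) + (x : ℕ), by omega⟩ := by
              apply Fin.ext; simp
            have hcc := hchain ⟨(r : ℕ) + (x : ℕ), hidx⟩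
            rw [hsucc, hcs] at hcc
            have : μ (b (x + 1)) = μ' (b x) := hcc
            rw [← this, ht' (x + 1)]
        rw [hgoal, ← ht' x]
        exact hstrict (b x) (hbD x)
      · -- extend the chain with j
        push_neg at hjr
        have hjD : μ j ≠ μ' j := by rw [hj1]; exact fun h => hj2 h.symm
        refine ih (k + 1) (Fin.snoc a j) (by omega) ?_ ?_ ?_
        · intro x y hxy
          rcases Fin.eq_castSucc_or_eq_last x with ⟨x', rfl⟩ | rfl <;>
            rcases Fin.eq_castSucc_or_eq_last y with ⟨y', rfl⟩ | rfl
          · rw [Fin.snoc_castSucc, Fin.snoc_castSucc] at hxy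
            exact congrArg Fin.castSucc (hinj hxy)
          · rw [Fin.snoc_castSucc, Fin.snoc_last] at hxy
            exact absurd hxy (hjr x')
          · rw [Fin.snoc_castSucc, Fin.snoc_last] at hxy
            exact absurd hxy.symm (hjr y')
          · rfl
        · intro r
          rcases Fin.eq_castSucc_or_eq_last r with ⟨r', rfl⟩ | rfl
          · rw [Fin.snoc_castSucc]; exact hD r'
          · rw [Fin.snoc_last]; exact hjD
        · intro r
          rcases Fin.eq_castSucc_or_eq_last r with ⟨r', rfl⟩ | rfl
          · have h1 : (r'.castSucc : Fin (k+1)).succ = (r'.succ).castSucc := by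
              apply Fin.ext; simp
            simp only [h1, Fin.snoc_castSucc]
            exact hchain r'
          · have h1 : (Fin.last k).succ = Fin.last (k + 1) := by
              apply Fin.ext; simp
            simp only [h1, Fin.snoc_last, Fin.snoc_castSucc]
            rw [hj1, hs]

end Aux

/-- a maximal individually rational matching is Pareto
efficient iff it admits no improving chain and no improving cycle. -/
theorem maximal_efficient_iff_no_chain_no_cycle
    (P : Prof I S) (q : S → ℕ) (μ : Matching I S)
    (hF : Feasible q μ) (hIR : IndivRational P μ)
    (hMax : MaximalMatching P q μ) :
    Efficient P q μ ↔ ¬ HasImpChain P q μ ∧ ¬ HasImpCycle P μ := by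
  constructor
  · intro hEff
    constructor
    · rintro ⟨n, a, t, hc⟩
      exact hEff (chain_dominates P q μ hIR hc hF)
    · rintro ⟨n, a, t, hc⟩
      exact hEff (cycle_dominates P q μ hIR hc hF)
  · rintro ⟨hnc, hncy⟩ ⟨μ', hF', hIR', hdom, j0, hj0⟩
    have hj0' : μ (j0) ≠ μ' (j0) := fun h => by rw [h] at hj0; exact lt_irrefl _ hj0
    have := extend_chain P q μ hIR hF' hdom (Fintype.card I) 0
      (fun _ => j0) (by omega)
      (fun x y _ => by have hx := x.isLt; have hy := y.isLt; exact Fin.ext (by omega))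
      (fun _ => hj0') (fun r => r.elim0)
    rcases this with h | h
    · exact hnc h
    · exact hncy h
end

section
/- The matching produced by Step 1 of an EAM mechanism is maximal: if μ is obtained by iteratively restricting, according to a fixed enumeration (i_1,...,i_n) of students, the set of individually rational matchings to those assigning student i_k whenever such matchings exist, then any matching μ in the final nonempty set ξ^n is a maximal individually rational matching. -/
/-!
Sets of students that some feasible individually rational matching assigns simultaneously
are the independent sets of a transversal matroid: match each student to the seats of the
schools acceptable to them, and Hall's theorem characterises independence. The refinement
makes the set of students assigned by `μ` inclusion-maximal, because a student `i_k` left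
unassigned could not be added to the students required at step `k`, a subset of those
assigned by `μ`. In a matroid, inclusion-maximal independent sets have maximum size.
-/

open Finset
open scoped Classical

variable {I S : Type*} [Fintype I] [DecidableEq I] [Fintype S] [DecidableEq S]

variable {I S : Type*} [Fintype I] [DecidableEq I] [Fintype S] [DecidableEq S]

section Hall

variable {ι α : Type*} [DecidableEq α] (N : ι → Finset α)

def HallCond (X : Finset ι) : Prop :=
  ∀ X' ⊆ X, #X' ≤ #(X'.biUnion N)

theorem hallCond_iff_exists_injective (X : Finset ι) :
    HallCond N X ↔ ∃ f : X → α, Function.Injective f ∧ ∀ x : X, f x ∈ N x := by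
  rw [← Finset.all_card_le_biUnion_card_iff_exists_injective]
  have key : ∀ s : Finset X, #s ≤ #(s.biUnion fun x => N x) ↔
      #(s.map (.subtype _)) ≤ #((s.map (.subtype _)).biUnion N) := by
    intro s
    rw [card_map]
    congr! 2
    ext; simp
  refine ⟨fun h s => (key s).2 (h _ fun i hi => ?_), fun h X' hX' => ?_⟩
  · obtain ⟨x, -, rfl⟩ := mem_map.1 hi
    exact x.2
  · simpa only [subtype_map_of_mem hX'] using (key _).1 (h (X'.subtype (· ∈ X)))

def IsTight (A : Finset ι) : Prop :=
  #(A.biUnion N) ≤ #A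

variable {N} [DecidableEq ι]

theorem HallCond.isTight_union {X A B : Finset ι} (hX : HallCond N X) (hA : A ⊆ X)
    (hAt : IsTight N A) (hBt : IsTight N B) : IsTight N (A ∪ B) := by
  have := hX (A ∩ B) (inter_subset_left.trans hA)
  have hsub : (A ∩ B).biUnion N ⊆ A.biUnion N ∩ B.biUnion N :=
    subset_inter (biUnion_subset_biUnion_of_subset_left _ inter_subset_left)
      (biUnion_subset_biUnion_of_subset_left _ inter_subset_right)
  have := card_union_add_card_inter (A.biUnion N) (B.biUnion N)
  have := card_union_add_card_inter A B
  have := card_le_card hsub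
  unfold IsTight at *
  rw [union_biUnion]
  omega

theorem HallCond.isTight_biUnion {κ : Type*} [DecidableEq κ] {X : Finset ι} (hX : HallCond N X)
    (T : Finset κ) {A : κ → Finset ι} (hAX : ∀ t ∈ T, A t ⊆ X)
    (hAt : ∀ t ∈ T, IsTight N (A t)) : IsTight N (T.biUnion A) := by
  induction T using Finset.induction_on with
  | empty => simp [IsTight]
  | insert t T _ ih =>
    rw [biUnion_insert]
    exact hX.isTight_union (hAX t (mem_insert_self t T)) (hAt t (mem_insert_self t T))
      (ih (fun u hu => hAX u (mem_insert_of_mem hu)) fun u hu => hAt u (mem_insert_of_mem hu))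

/-- A Hall violator of `insert i X` is, after removing `i`, a tight subset of `X` whose
neighbourhood already contains that of `i`. -/
theorem HallCond.exists_isTight_of_not_hallCond_insert {X : Finset ι} {i : ι}
    (hX : HallCond N X) (hi : ¬ HallCond N (insert i X)) :
    ∃ A ⊆ X, IsTight N A ∧ N i ⊆ A.biUnion N := by
  simp only [HallCond, not_forall, not_le] at hi
  obtain ⟨W, hW, hlt⟩ := hi
  have hA : W.erase i ⊆ X := fun j hj => by
    simpa [ne_of_mem_erase hj] using hW (mem_of_mem_erase hj)
  have hiW : i ∈ W := by
    by_contra h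
    rw [erase_eq_of_notMem h] at hA
    exact (hX W hA).not_gt hlt
  have hWA : W.biUnion N = N i ∪ (W.erase i).biUnion N := by
    rw [← biUnion_insert, insert_erase hiW]
  have hsub : (W.erase i).biUnion N ⊆ W.biUnion N :=
    biUnion_subset_biUnion_of_subset_left _ (erase_subset i W)
  have := card_erase_add_one hiW
  have := hX _ hA
  have heq : (W.erase i).biUnion N = W.biUnion N := eq_of_subset_of_card_le hsub (by omega)
  refine ⟨W.erase i, hA, ?_, ?_⟩
  · unfold IsTight
    rw [heq]
    omega
  · rw [heq, hWA]
    exact subset_union_left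

/-- The exchange axiom of the transversal matroid of `N`. If it failed, the tight sets
provided for the elements of `Y \ X` would unite to a tight `B ⊆ X` whose neighbourhood
contains that of `Y \ (X \ B)`, and Hall's condition for `Y` would give `#Y ≤ #X`. -/
theorem HallCond.exists_mem_sdiff_hallCond_insert {X Y : Finset ι} (hX : HallCond N X)
    (hY : HallCond N Y) (hlt : #X < #Y) : ∃ i ∈ Y \ X, HallCond N (insert i X) := by
  by_contra! hcon
  choose! A hAX hAt hNA using fun i (hi : i ∈ Y \ X) =>
    hX.exists_isTight_of_not_hallCond_insert (hcon i hi)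
  set B := (Y \ X).biUnion A
  have hBX : B ⊆ X := biUnion_subset.2 hAX
  have hBt : IsTight N B := hX.isTight_biUnion _ hAX hAt
  have hN : (Y \ (X \ B)).biUnion N ⊆ B.biUnion N := by
    refine biUnion_subset.2 fun i hi => ?_
    by_cases hiX : i ∈ X
    · exact subset_biUnion_of_mem N (by grind)
    · have hiYX : i ∈ Y \ X := mem_sdiff.2 ⟨(mem_sdiff.1 hi).1, hiX⟩
      exact (hNA i hiYX).trans
        (biUnion_subset_biUnion_of_subset_left _ (subset_biUnion_of_mem A hiYX))
  have hHall := hY (Y \ (X \ B)) sdiff_subset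
  have hNcard := card_le_card hN
  have hYsplit : #Y ≤ #(Y \ (X \ B)) + #(X \ B) := card_le_card_sdiff_add_card
  have hXB := card_sdiff_of_subset hBX
  have hBcard := card_le_card hBX
  unfold IsTight at hBt
  omega

end Hall

theorem exists_rank_injective_on_fibers {ι β : Type*} [Fintype ι] [DecidableEq β] (g : ι → β) :
    ∃ r : ι → ℕ, (∀ i, r i < #{j | g j = g i}) ∧ ∀ i j, g i = g j → r i = r j → i = j := by
  let e : ∀ b, {j // g j = b} ≃ Fin (Fintype.card {j // g j = b}) := fun _ => Fintype.equivFin _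
  refine ⟨fun i => e (g i) ⟨i, rfl⟩, fun i => ?_, fun i j hij hr => ?_⟩
  · simpa [Fintype.card_subtype] using (e (g i) ⟨i, rfl⟩).isLt
  · have hj : ∀ b (h : g j = b), (e b ⟨j, h⟩ : ℕ) = e (g j) ⟨j, rfl⟩ := by
      rintro _ rfl
      rfl
    exact congrArg Subtype.val ((e (g i)).injective (Fin.ext (hr.trans (hj _ hij.symm).symm)))

/-- Seat `(s, k)` is the `k`-th place at school `s`. -/
def seats {ι σ : Type*} [Fintype σ] [DecidableEq σ] (P : Prof ι σ) (q : σ → ℕ) (i : ι) :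
    Finset (σ × ℕ) :=
  (univ.filter fun s => (P i).1 none ≤ (P i).1 (some s)).biUnion fun s => {s} ×ˢ range (q s)

theorem mem_seats {ι σ : Type*} [Fintype σ] [DecidableEq σ] {P : Prof ι σ} {q : σ → ℕ} {i : ι}
    {p : σ × ℕ} :
    p ∈ seats P q i ↔ (P i).1 none ≤ (P i).1 (some p.1) ∧ p.2 < q p.1 := by
  obtain ⟨s, k⟩ := p
  simp [seats]

section Assignable

variable {ι σ : Type*} [Fintype ι] [Fintype σ] [DecidableEq σ]

def IsAssignable (P : Prof ι σ) (q : σ → ℕ) (X : Finset ι) : Prop :=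
  ∃ ν : Matching ι σ, Feasible q ν ∧ IndivRational P ν ∧ ∀ i ∈ X, ν i ≠ none

variable {P : Prof ι σ} {q : σ → ℕ} {X : Finset ι}

theorem IsAssignable.hallCond (h : IsAssignable P q X) : HallCond (seats P q) X := by
  obtain ⟨ν, hF, hIR, hX⟩ := h
  obtain ⟨r, hr, hrinj⟩ := exists_rank_injective_on_fibers ν
  have hsome : ∀ x : X, (ν x).isSome := fun x => Option.isSome_iff_ne_none.2 (hX x x.2)
  refine (hallCond_iff_exists_injective _ X).2
    ⟨fun x => ((ν x).get (hsome x), r x), fun x y hxy => ?_, fun x => mem_seats.2 ⟨?_, ?_⟩⟩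
  · simp only [Prod.mk.injEq] at hxy
    have hν : ν x = ν y := by rw [← Option.some_get (hsome x), hxy.1, Option.some_get]
    exact Subtype.ext (hrinj x y hν hxy.2)
  · simpa using hIR x
  · have := hF ((ν x).get (hsome x))
    rw [Option.some_get] at this
    exact (hr x).trans_le this

theorem IsAssignable.of_hallCond (h : HallCond (seats P q) X) : IsAssignable P q X := by
  obtain ⟨f, hf, hfN⟩ := (hallCond_iff_exists_injective _ X).1 h
  refine ⟨fun i => if hi : i ∈ X then some (f ⟨i, hi⟩).1 else none, fun s => ?_, fun i => ?_,
    fun i hi => by simp [hi]⟩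
  · have hmap : (univ.filter fun i => (if hi : i ∈ X then some (f ⟨i, hi⟩).1 else none) = some s)
        = (univ.filter fun x : X => (f x).1 = s).map (.subtype _) := by
      ext i
      simp
    rw [hmap, card_map]
    calc _ ≤ #({s} ×ˢ range (q s)) := card_le_card_of_injOn f (fun x hx => ?_) hf.injOn
      _ = q s := by simp
    have hx : (f x).1 = s := (mem_filter.1 hx).2
    have := (mem_seats.1 (hfN x)).2
    rw [hx] at this
    exact mem_product.2 ⟨mem_singleton.2 hx, mem_range.2 this⟩
  · dsimp only
    split_ifs with hi
    · exact (mem_seats.1 (hfN ⟨i, hi⟩)).1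
    · exact le_rfl

theorem IsAssignable.card_le_of_forall_not_insert [DecidableEq ι] {Y : Finset ι}
    (hX : IsAssignable P q X) (hmax : ∀ i ∉ X, ¬ IsAssignable P q (insert i X))
    (hY : IsAssignable P q Y) : #Y ≤ #X := by
  by_contra! hlt
  obtain ⟨i, hi, hiX⟩ := hX.hallCond.exists_mem_sdiff_hallCond_insert hY.hallCond hlt
  exact hmax i (mem_sdiff.1 hi).2 (.of_hallCond hiX)

end Assignable

section Greedy

variable {ι σ : Type*} [Fintype ι] [DecidableEq ι] [Fintype σ]

theorem foldl_xiStep_subset (A : Set (Matching ι σ)) (L : List ι) : L.foldl xiStep A ⊆ A := by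
  induction L generalizing A with
  | nil => exact Set.Subset.rfl
  | cons a L ih =>
    refine (ih _).trans ?_
    unfold xiStep
    split_ifs
    · exact Set.sep_subset _ _
    · exact Set.Subset.rfl

/-- Every `ν ∈ A` assigning all students that `μ` assigns survives each step that `μ`
survives, so a student of `L` left unassigned by `μ` is left unassigned by `ν` too. -/
theorem ne_none_of_mem_foldl_xiStep {A : Set (Matching ι σ)} {L : List ι} {μ ν : Matching ι σ}
    (hμ : μ ∈ L.foldl xiStep A) (hν : ν ∈ A) (hμν : ∀ j, μ j ≠ none → ν j ≠ none)
    {i : ι} (hi : i ∈ L) (hνi : ν i ≠ none) : μ i ≠ none := by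
  induction L generalizing A with
  | nil => simp at hi
  | cons a L ih =>
    have hμa : μ ∈ xiStep A a := foldl_xiStep_subset _ L hμ
    rcases List.mem_cons.1 hi with rfl | hi
    · rw [xiStep, if_pos ⟨ν, hν, hνi⟩] at hμa
      exact hμa.2
    · refine ih hμ ?_ hi
      unfold xiStep at hμa ⊢
      split_ifs at hμa ⊢
      · exact ⟨hν, hμν a hμa.2⟩
      · exact hν

end Greedy

theorem EAM_stage_one_maximal_general
    (P : Prof I S) (q : S → ℕ) (L : List I)
    (hcomp : ∀ i : I, i ∈ L)
    (μ : Matching I S) (hμ : μ ∈ xiList P q L) :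
    Feasible q μ ∧ IndivRational P μ ∧ MaximalMatching P q μ := by
  obtain ⟨hF, hIR⟩ : Feasible q μ ∧ IndivRational P μ := foldl_xiStep_subset _ L hμ
  refine ⟨hF, hIR, fun ν hνF hνIR => ?_⟩
  refine IsAssignable.card_le_of_forall_not_insert ⟨μ, hF, hIR, by simp⟩ ?_ ⟨ν, hνF, hνIR, by simp⟩
  rintro i hi ⟨ν', hF', hIR', hν'⟩
  have hμν' : ∀ j, μ j ≠ none → ν' j ≠ none := fun j hj =>
    hν' j (mem_insert_of_mem (by simpa using hj))
  have hμi : μ i = none := by simpa using hi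
  exact ne_none_of_mem_foldl_xiStep hμ ⟨hF', hIR'⟩ hμν' (hcomp i) (hν' i (mem_insert_self i _)) hμi

/-- any matching in the final set ξ^n of the first stage of an
EAM mechanism (for an enumeration L of the students) is a maximal
individually rational matching. -/
theorem EAM_stage_one_maximal
    (P : Prof I S) (q : S → ℕ) (L : List I)
    (hnd : L.Nodup) (hcomp : ∀ i : I, i ∈ L)
    (μ : Matching I S) (hμ : μ ∈ xiList P q L) :
    Feasible q μ ∧ IndivRational P μ ∧ MaximalMatching P q μ :=
  EAM_stage_one_maximal_general P q L hcomp μ hμ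
end

section
/- Every EAM mechanism is maximal and Pareto efficient: its outcome assigns the maximum possible number of students among individually rational matchings, and is not Pareto dominated by any individually rational matching. -/
/-!
Call a set `X` of students assignable if some feasible individually rational matching assigns
every student of `X`. Splitting each school `s` into `q s` seats, Hall's theorem shows that `X` is
assignable iff every `Y ⊆ X` finds at least `#Y` acceptable seats. Since a union of Hall-tight
subsets of a Hall set is again tight, assignable sets have the matroid augmentation property, so
the inclusion-maximal assignable set built greedily by the first stage has maximum cardinality.
Implementing a cycle permutes the assignment, and implementing a chain permutes it and fills one
free seat; hence the second stage keeps feasibility and individual rationality and never lowers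
the number of assigned students.

For efficiency, let `μ'` Pareto dominate an outcome `μ` without improving chains. A student who
strictly improves moves to a school that is full under `μ`, so one of its occupants leaves it and
strictly improves as well. Following occupants from student to student eventually closes a cycle,
which is an improving cycle for `μ`.
-/

open Finset
open scoped Classical

variable {I S : Type*} [Fintype I] [DecidableEq I] [Fintype S] [DecidableEq S]

variable {I S : Type*} [Fintype I] [DecidableEq I] [Fintype S] [DecidableEq S]

namespace Finset

variable {ι α : Type*} [DecidableEq α] (N : ι → Finset α)

def HallCondition (X : Finset ι) : Prop := ∀ Y ⊆ X, #Y ≤ #(Y.biUnion N)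

variable {N}

theorem HallCondition.exists_injective {X : Finset ι} (h : HallCondition N X) :
    ∃ f : X → α, Function.Injective f ∧ ∀ x : X, f x ∈ N x := by
  classical
  refine (all_card_le_biUnion_card_iff_exists_injective _).mp fun Z => ?_
  have hZ : Z.image Subtype.val ⊆ X := fun x hx => by
    obtain ⟨y, -, rfl⟩ := mem_image.mp hx
    exact y.2
  simpa [image_biUnion, card_image_of_injective _ Subtype.val_injective] using h _ hZ

variable [DecidableEq ι] {F : Finset ι}

theorem HallCondition.exists_tight_of_not_insert (hF : HallCondition N F) {i : ι}
    (h : ¬HallCondition N (insert i F)) :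
    ∃ Y ⊆ F, #(Y.biUnion N) ≤ #Y ∧ N i ⊆ Y.biUnion N := by
  simp only [HallCondition, not_forall, not_le] at h
  obtain ⟨Y, hYF, hdef⟩ := h
  have hY'F : Y.erase i ⊆ F := fun x hx =>
    (mem_insert.mp (hYF (mem_of_mem_erase hx))).resolve_left (ne_of_mem_erase hx)
  have hiY : i ∈ Y := by
    by_contra hiY
    rw [← erase_eq_of_notMem hiY] at hdef
    exact (hF _ hY'F).not_gt hdef
  rw [← insert_erase hiY, biUnion_insert, card_insert_of_notMem (notMem_erase i Y)] at hdef
  have hHall := hF _ hY'F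
  have hsub := card_le_card (subset_union_right (s₁ := N i) (s₂ := (Y.erase i).biUnion N))
  have heq : (Y.erase i).biUnion N = N i ∪ (Y.erase i).biUnion N :=
    eq_of_subset_of_card_le subset_union_right (by omega)
  exact ⟨Y.erase i, hY'F, by omega, heq ▸ subset_union_left⟩

theorem HallCondition.tight_union (hF : HallCondition N F) {Y Z : Finset ι} (hYF : Y ⊆ F)
    (hY : #(Y.biUnion N) ≤ #Y) (hZ : #(Z.biUnion N) ≤ #Z) :
    #((Y ∪ Z).biUnion N) ≤ #(Y ∪ Z) := by
  have hinter : #(Y ∩ Z) ≤ #(Y.biUnion N ∩ Z.biUnion N) :=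
    (hF _ (inter_subset_left.trans hYF)).trans <| card_le_card <|
      subset_inter (biUnion_subset_biUnion_of_subset_left _ inter_subset_left)
        (biUnion_subset_biUnion_of_subset_left _ inter_subset_right)
  have := card_union_add_card_inter (Y.biUnion N) (Z.biUnion N)
  have := card_union_add_card_inter Y Z
  rw [union_biUnion]
  omega

theorem HallCondition.tight_biUnion {β : Type*} (hF : HallCondition N F) {D : Finset β}
    {Y : β → Finset ι} (hYF : ∀ d ∈ D, Y d ⊆ F) (hY : ∀ d ∈ D, #((Y d).biUnion N) ≤ #(Y d)) :
    #((D.biUnion Y).biUnion N) ≤ #(D.biUnion Y) := by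
  classical
  induction D using Finset.induction_on with
  | empty => simp
  | insert d D _ ih =>
    simp only [forall_mem_insert] at hYF hY
    rw [biUnion_insert]
    exact hF.tight_union hYF.1 hY.1 (ih hYF.2 hY.2)

theorem HallCondition.exists_insert_of_card_lt {B : Finset ι} (hF : HallCondition N F)
    (hB : HallCondition N B) (hlt : #F < #B) : ∃ i ∈ B \ F, HallCondition N (insert i F) := by
  by_contra! h
  choose! Y hYF hYtight hYcover using fun i hi => hF.exists_tight_of_not_insert (h i hi)
  set W := (B \ F).biUnion Y
  have hWF : W ⊆ F := biUnion_subset.mpr hYF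
  have hWtight : #(W.biUnion N) ≤ #W := hF.tight_biUnion hYF hYtight
  have hcover : ((B \ F) ∪ (W ∩ B)).biUnion N ⊆ W.biUnion N := by
    refine biUnion_subset.mpr fun i hi => ?_
    rcases mem_union.mp hi with hi | hi
    · exact (hYcover i hi).trans <|
        biUnion_subset_biUnion_of_subset_left _ (subset_biUnion_of_mem Y hi)
    · exact subset_biUnion_of_mem N (mem_inter.mp hi).1
  -- `#W ≤ #(W ∩ B) + #(F \ B) < #(W ∩ B) + #(B \ F)`, so `(B \ F) ∪ (W ∩ B)` violates Hall's
  -- condition for `B`: all its seats are seats of `W`.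
  have hHall := hB ((B \ F) ∪ (W ∩ B)) (union_subset sdiff_subset inter_subset_right)
  have hdisj : Disjoint (B \ F) (W ∩ B) :=
    disjoint_left.mpr fun i hi hi' => (mem_sdiff.mp hi).2 (hWF (mem_inter.mp hi').1)
  rw [card_union_of_disjoint hdisj] at hHall
  have := card_le_card hcover
  have := card_le_card (sdiff_subset_sdiff hWF (subset_refl B))
  have := card_sdiff_add_card_inter W B
  have := card_sdiff_add_card_inter B F
  have := card_sdiff_add_card_inter F B
  rw [inter_comm F B] at this
  omega

end Finset

section Seats

variable {I S : Type*}

theorem IndivRational.none_lt_of_eq_some {P : Prof I S} {μ : Matching I S}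
    (hir : IndivRational P μ) {i : I} {s : S} (h : μ i = some s) :
    (P i).1 none < (P i).1 (some s) :=
  (h ▸ hir i).lt_of_ne fun heq => Option.some_ne_none s ((P i).2 heq).symm

variable [Fintype I] [DecidableEq S]

def assigning (P : Prof I S) (q : S → ℕ) (X : Finset I) : Set (Matching I S) :=
  {μ | Feasible q μ ∧ IndivRational P μ ∧ ∀ i ∈ X, μ i ≠ none}

theorem assigning_anti {P : Prof I S} {q : S → ℕ} {X Y : Finset I} (h : X ⊆ Y) :
    assigning P q Y ⊆ assigning P q X :=
  fun _ ⟨hf, hir, hY⟩ => ⟨hf, hir, fun i hi => hY i (h hi)⟩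

variable [Fintype S]

def acceptableSeats (P : Prof I S) (q : S → ℕ) (i : I) : Finset (Σ s : S, Fin (q s)) :=
  (univ.filter fun s => (P i).1 none < (P i).1 (some s)).sigma fun _ => univ

variable {P : Prof I S} {q : S → ℕ}

theorem hallCondition_of_mem_assigning {X : Finset I} {μ : Matching I S}
    (hμ : μ ∈ assigning P q X) : HallCondition (acceptableSeats P q) X := by
  obtain ⟨hf, hir, hX⟩ := hμ
  intro Y hY
  set T := Y.biUnion fun i => univ.filter fun s => (P i).1 none < (P i).1 (some s)
  have hmaps : (Y : Set I).MapsTo μ (T.image some) := by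
    intro i hi
    obtain ⟨s, hs⟩ := Option.ne_none_iff_exists'.mp (hX i (hY hi))
    rw [hs]
    exact mem_image_of_mem _ <|
      mem_biUnion.mpr ⟨i, hi, mem_filter.mpr ⟨mem_univ _, hir.none_lt_of_eq_some hs⟩⟩
  have hseats : Y.biUnion (acceptableSeats P q) = T.sigma fun _ => univ := by
    ext; simp [acceptableSeats, T]
  calc #Y = ∑ s ∈ T, #{i ∈ Y | μ i = some s} := by
        rw [card_eq_sum_card_fiberwise hmaps, sum_image fun _ _ _ _ => Option.some_inj.mp]
    _ ≤ ∑ s ∈ T, q s := sum_le_sum fun s _ =>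
        (card_le_card (filter_subset_filter _ (subset_univ Y))).trans (hf s)
    _ = #(Y.biUnion (acceptableSeats P q)) := by simp [hseats, card_sigma]

theorem assigning_nonempty_of_hallCondition {X : Finset I}
    (hX : HallCondition (acceptableSeats P q) X) : (assigning P q X).Nonempty := by
  obtain ⟨f, hinj, hf⟩ := hX.exists_injective
  refine ⟨fun i => if h : i ∈ X then some (f ⟨i, h⟩).1 else none, fun s => ?_, fun i => ?_, ?_⟩
  · have hfiber : univ.filter (fun i => (if h : i ∈ X then some (f ⟨i, h⟩).1 else none) = some s)
        = (univ.filter fun x : X => (f x).1 = s).map (Function.Embedding.subtype _) := by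
      ext i
      by_cases hi : i ∈ X <;> simp [hi]
    rw [hfiber, card_map]
    calc _ ≤ #(({s} : Finset S).sigma fun s => (univ : Finset (Fin (q s)))) :=
          card_le_card_of_injOn f (fun x hx => by simpa using hx) hinj.injOn
      _ = q s := by simp [card_sigma]
  · by_cases hi : i ∈ X
    · simpa [hi] using (mem_filter.mp (mem_sigma.mp (hf ⟨i, hi⟩)).1).2.le
    · simp [hi]
  · intro i hi
    simp [hi]

end Seats

section FirstStage

variable {I S : Type*} [Fintype I] [DecidableEq I] [Fintype S] [DecidableEq S]
  {P : Prof I S} {q : S → ℕ}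

theorem xiStep_assigning (F : Finset I) (i : I) :
    xiStep (assigning P q F) i =
      if (assigning P q (insert i F)).Nonempty then assigning P q (insert i F)
      else assigning P q F := by
  have h : {μ ∈ assigning P q F | μ i ≠ none} = assigning P q (insert i F) := by
    ext μ
    simp only [assigning, Set.mem_ofPred_eq, forall_mem_insert]
    tauto
  simp only [xiStep, ← h, Set.Nonempty, Set.mem_ofPred_eq]

theorem foldl_xiStep_assigning (l : List I) (F : Finset I) :
    ∃ F' ⊇ F, l.foldl xiStep (assigning P q F) = assigning P q F' ∧
      ∀ i ∈ l, (assigning P q (insert i F')).Nonempty → i ∈ F' := by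
  induction l generalizing F with
  | nil => exact ⟨F, subset_refl F, rfl, by simp⟩
  | cons a l ih =>
    rw [List.foldl_cons, xiStep_assigning]
    split_ifs with ha
    · obtain ⟨F', hF', heq, hmax⟩ := ih (insert a F)
      refine ⟨F', (subset_insert a F).trans hF', heq, ?_⟩
      rintro i hi hins
      rcases List.mem_cons.mp hi with rfl | hi
      exacts [hF' (mem_insert_self i F), hmax i hi hins]
    · obtain ⟨F', hF', heq, hmax⟩ := ih F
      refine ⟨F', hF', heq, ?_⟩
      rintro i hi hins
      rcases List.mem_cons.mp hi with rfl | hi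
      exacts [absurd (hins.mono (assigning_anti (insert_subset_insert i hF'))) ha,
        hmax i hi hins]

theorem maximalMatching_of_mem_xiList {L : List I} (hL : ∀ i, i ∈ L) {μ : Matching I S}
    (h : μ ∈ xiList P q L) : Feasible q μ ∧ IndivRational P μ ∧ MaximalMatching P q μ := by
  obtain ⟨F, -, heq, hmax⟩ := foldl_xiStep_assigning (P := P) (q := q) L ∅
  have hstart : {μ : Matching I S | Feasible q μ ∧ IndivRational P μ} = assigning P q ∅ := by
    ext; simp [assigning]
  rw [xiList, hstart, heq] at h
  obtain ⟨hf, hir, hF⟩ := h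
  refine ⟨hf, hir, fun μ' hf' hir' => ?_⟩
  set B := univ.filter fun i => μ' i ≠ none
  have hB : HallCondition (acceptableSeats P q) B :=
    hallCondition_of_mem_assigning ⟨hf', hir', fun i hi => (mem_filter.mp hi).2⟩
  have hBF : #B ≤ #F := by
    by_contra! hlt
    obtain ⟨i, hi, hins⟩ :=
      (hallCondition_of_mem_assigning ⟨hf, hir, hF⟩).exists_insert_of_card_lt hB hlt
    exact (mem_sdiff.mp hi).2 (hmax i (hL i) (assigning_nonempty_of_hallCondition hins))
  exact hBF.trans (card_le_card fun i hi => mem_filter.mpr ⟨mem_univ i, hF i hi⟩)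

end FirstStage

section Rotation

variable {I : Type*} {n : ℕ} (a : Fin (n + 1) → I) (ha : Function.Injective a)

noncomputable def rotateAlong : Equiv.Perm I :=
  (finRotate (n + 1)).extendDomain (Equiv.ofInjective a ha)

theorem rotateAlong_apply_self (k : Fin (n + 1)) : rotateAlong a ha (a k) = a (k + 1) := by
  simpa [rotateAlong, finRotate_apply] using
    Equiv.Perm.extendDomain_apply_image (finRotate (n + 1)) (Equiv.ofInjective a ha) k

theorem rotateAlong_apply_of_notMem {j : I} (hj : ∀ k, j ≠ a k) : rotateAlong a ha j = j :=
  Equiv.Perm.extendDomain_apply_not_subtype _ _ fun ⟨k, hk⟩ => hj k hk.symm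

end Rotation

section SecondStage

variable {I S : Type*} [Fintype I] {P : Prof I S} {q : S → ℕ} {μ μ' : Matching I S}

theorem msize_comp_perm (σ : Equiv.Perm I) : msize (μ ∘ σ) = msize μ :=
  card_equiv σ (by simp)

theorem msize_le_update [DecidableEq I] (i : I) (s : S) :
    msize μ ≤ msize (Function.update μ i (some s)) :=
  card_le_card fun j hj => by by_cases hji : j = i <;> simp_all

variable [DecidableEq S]

theorem Feasible.comp_perm (hf : Feasible q μ) (σ : Equiv.Perm I) : Feasible q (μ ∘ σ) :=
  fun s => (card_equiv σ (by simp)).trans_le (hf s)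

variable [DecidableEq I]

theorem Feasible.update_of_card_lt (hf : Feasible q μ) {s : S}
    (hs : #(univ.filter fun j => μ j = some s) < q s) (i : I) :
    Feasible q (Function.update μ i (some s)) := by
  intro s'
  have hsub : univ.filter (fun j => Function.update μ i (some s) j = some s') ⊆
      insert i (univ.filter fun j => μ j = some s') := by
    intro j hj
    by_cases hji : j = i <;> simp_all
  by_cases hs' : s' = s
  · subst hs'
    exact (card_le_card hsub).trans ((card_insert_le _ _).trans hs)
  · refine (card_le_card fun j hj => ?_).trans (hf s')
    rcases mem_insert.mp (hsub hj) with rfl | hj'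
    · simp [Ne.symm hs'] at hj
    · exact hj'

theorem ImplementStep.exists_perm (h : ImplementStep P q μ μ') :
    ∃ σ : Equiv.Perm I, μ' = μ ∘ σ ∨ ∃ i s, #(univ.filter fun j => μ j = some s) < q s ∧
      μ' = Function.update (μ ∘ σ) i (some s) := by
  rcases h with ⟨n, a, t, ⟨ha, -, hmid, hlast⟩, hnew, hold⟩ | ⟨n, a, t, ⟨ha, hcyc, -⟩, hnew, hold⟩
  · refine ⟨rotateAlong a ha, .inr ⟨a (Fin.last n), t (Fin.last n), hlast, funext fun j => ?_⟩⟩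
    by_cases hj : ∃ k, j = a k
    · obtain ⟨k, rfl⟩ := hj
      rcases Fin.eq_castSucc_or_eq_last k with ⟨k, rfl⟩ | rfl
      · rw [Function.update_of_ne (ha.ne (Fin.castSucc_lt_last k).ne), Function.comp_apply,
          rotateAlong_apply_self, Fin.coeSucc_eq_succ, hnew, hmid]
      · rw [Function.update_self, hnew]
    · replace hj := not_exists.mp hj
      rw [Function.update_of_ne (hj _), Function.comp_apply, rotateAlong_apply_of_notMem a ha hj,
        hold j hj]
  · refine ⟨rotateAlong a ha, .inl (funext fun j => ?_)⟩
    by_cases hj : ∃ k, j = a k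
    · obtain ⟨k, rfl⟩ := hj
      rw [Function.comp_apply, rotateAlong_apply_self, hnew, hcyc]
    · replace hj := not_exists.mp hj
      rw [Function.comp_apply, rotateAlong_apply_of_notMem a ha hj, hold j hj]

theorem ImplementStep.feasible (h : ImplementStep P q μ μ') (hf : Feasible q μ) :
    Feasible q μ' := by
  obtain ⟨σ, rfl | ⟨i, s, hs, rfl⟩⟩ := h.exists_perm
  · exact hf.comp_perm σ
  · exact (hf.comp_perm σ).update_of_card_lt ((card_equiv σ (by simp)).trans_lt hs) i

theorem ImplementStep.msize_le (h : ImplementStep P q μ μ') : msize μ ≤ msize μ' := by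
  obtain ⟨σ, rfl | ⟨i, s, -, rfl⟩⟩ := h.exists_perm
  · exact (msize_comp_perm σ).ge
  · exact (msize_comp_perm σ).ge.trans (msize_le_update i s)

theorem ImplementStep.pref_le (h : ImplementStep P q μ μ') (j : I) :
    (P j).1 (μ j) ≤ (P j).1 (μ' j) := by
  rcases h with ⟨n, a, t, ⟨-, himp, -⟩, hnew, hold⟩ | ⟨n, a, t, ⟨-, hcyc, himp⟩, hnew, hold⟩
  · by_cases hj : ∃ k, j = a k
    · obtain ⟨k, rfl⟩ := hj
      exact (hnew k ▸ himp k).le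
    · rw [hold j (not_exists.mp hj)]
  · by_cases hj : ∃ k, j = a k
    · obtain ⟨k, rfl⟩ := hj
      exact (hcyc k ▸ hnew k ▸ himp k).le
    · rw [hold j (not_exists.mp hj)]

theorem reflTransGen_implementStep {μ₀ : Matching I S}
    (h : Relation.ReflTransGen (ImplementStep P q) μ₀ μ) (hf : Feasible q μ₀)
    (hir : IndivRational P μ₀) :
    Feasible q μ ∧ IndivRational P μ ∧ msize μ₀ ≤ msize μ := by
  induction h with
  | refl => exact ⟨hf, hir, le_rfl⟩
  | tail _ hstep ih =>
    obtain ⟨hf', hir', hsize⟩ := ih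
    exact ⟨hstep.feasible hf', fun j => (hir' j).trans (hstep.pref_le j),
      hsize.trans hstep.msize_le⟩

end SecondStage

theorem Function.exists_iterate_mem_periodicPts {α : Type*} [Finite α] (f : α → α) (x : α) :
    ∃ m, f^[m] x ∈ periodicPts f := by
  have hrep : ∀ m n, m < n → f^[m] x = f^[n] x → f^[m] x ∈ periodicPts f := fun m n hlt heq =>
    mk_mem_periodicPts (Nat.sub_pos_of_lt hlt) <| by
      rw [IsPeriodicPt, IsFixedPt, ← iterate_add_apply, Nat.sub_add_cancel hlt.le, heq]
  obtain ⟨m, n, heq, hne⟩ : ∃ m n, f^[m] x = f^[n] x ∧ m ≠ n := by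
    simpa [Function.Injective] using not_injective_infinite_finite (f^[·] x)
  rcases hne.lt_or_gt with hlt | hlt
  exacts [⟨m, hrep m n hlt heq⟩, ⟨n, hrep n m hlt heq.symm⟩]

section Efficiency

open Function

variable {I S : Type*} {P : Prof I S} {μ μ' : Matching I S}

theorem hasImpCycle_of_mem_periodicPts {f : I → I} {x : I} (hx : x ∈ periodicPts f)
    (hir : IndivRational P μ) (hmove : ∀ k, μ (f (f^[k] x)) = μ' (f^[k] x))
    (himp : ∀ k, (P (f^[k] x)).1 (μ (f^[k] x)) < (P (f^[k] x)).1 (μ' (f^[k] x))) :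
    HasImpCycle P μ := by
  obtain ⟨m, hm⟩ : ∃ m, minimalPeriod f x = m + 1 :=
    Nat.exists_eq_succ_of_ne_zero (minimalPeriod_pos_of_mem_periodicPts hx).ne'
  set a : Fin (m + 1) → I := fun k => f^[k] x
  have ha : ∀ k : Fin (m + 1), a (k + 1) = f (a k) := fun k => by
    have hk : ((k + 1 : Fin (m + 1)) : ℕ) = (k + 1) % minimalPeriod f x := by
      simp [Fin.val_add, hm]
    simp only [a, hk, iterate_mod_minimalPeriod_eq, iterate_succ_apply']
  have hassigned : ∀ k, ∃ s, μ' (a k) = some s := fun k =>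
    Option.ne_none_iff_exists'.mp fun h => (h ▸ himp k).not_ge (hir _)
  choose t' ht' using hassigned
  have hμ : ∀ k, μ (a k) = some (t' (k - 1)) := fun k => by
    rw [← ht', ← hmove, ← sub_add_cancel k 1, ha, add_sub_cancel_right]
  refine ⟨m, a, fun k => t' (k - 1), fun k l hkl => Fin.ext ?_, hμ, fun k => ?_⟩
  · exact iterate_injOn_Iio_minimalPeriod (by simp [hm, k.is_lt]) (by simp [hm, l.is_lt]) hkl
  · dsimp only
    rw [← hμ, add_sub_cancel_right, ← ht']
    exact himp k

variable [Fintype I] [DecidableEq S] {q : S → ℕ}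

theorem hasImpChain_of_card_lt {i : I} {s : S} (hi : (P i).1 (μ i) < (P i).1 (some s))
    (hs : #(univ.filter fun j => μ j = some s) < q s) : HasImpChain P q μ :=
  ⟨0, fun _ => i, fun _ => s, fun _ _ _ => Subsingleton.elim (α := Fin 1) _ _, fun _ => hi,
    fun k => k.elim0, hs⟩

theorem exists_improved_occupant (hir : IndivRational P μ) (hnc : ¬HasImpChain P q μ)
    (hf' : Feasible q μ') (hle : ∀ j, (P j).1 (μ j) ≤ (P j).1 (μ' j)) {i : I}
    (hi : (P i).1 (μ i) < (P i).1 (μ' i)) :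
    ∃ j, (P j).1 (μ j) < (P j).1 (μ' j) ∧ μ j = μ' i := by
  obtain ⟨s, hs⟩ : ∃ s, μ' i = some s :=
    Option.ne_none_iff_exists'.mp fun h => (h ▸ hi).not_ge (hir i)
  rw [hs] at hi ⊢
  -- otherwise `i` alone would form an improving chain
  have hfull : q s ≤ #(univ.filter fun j => μ j = some s) :=
    not_lt.mp fun hlt => hnc (hasImpChain_of_card_lt hi hlt)
  have hleaves : ¬(univ.filter fun j => μ j = some s) ⊆ univ.filter fun j => μ' j = some s := by
    intro hsub
    have hins : insert i (univ.filter fun j => μ j = some s) ⊆ univ.filter fun j => μ' j = some s :=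
      insert_subset (by simpa using hs) hsub
    have hi' : i ∉ univ.filter fun j => μ j = some s := by
      simpa using fun h => (h ▸ hi).false
    have := (card_le_card hins).trans (hf' s)
    rw [card_insert_of_notMem hi'] at this
    omega
  obtain ⟨j, hj, hj'⟩ := not_subset.mp hleaves
  simp only [mem_filter, mem_univ, true_and] at hj hj'
  exact ⟨j, (hle j).lt_of_ne fun h => hj' ((P j).2 h ▸ hj), hj⟩

theorem efficient_of_not_hasImpChain_of_not_hasImpCycle (hir : IndivRational P μ)
    (hnc : ¬HasImpChain P q μ) (hncy : ¬HasImpCycle P μ) : Efficient P q μ := by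
  rintro ⟨μ', hf', -, hle, j₀, hj₀⟩
  choose! f hf hfμ using fun i (hi : (P i).1 (μ i) < (P i).1 (μ' i)) =>
    exists_improved_occupant hir hnc hf' hle hi
  have horbit : ∀ k, (P (f^[k] j₀)).1 (μ (f^[k] j₀)) < (P (f^[k] j₀)).1 (μ' (f^[k] j₀)) := by
    intro k
    induction k with
    | zero => exact hj₀
    | succ k ih => rw [iterate_succ_apply']; exact hf _ ih
  obtain ⟨m, hm⟩ := exists_iterate_mem_periodicPts f j₀
  refine hncy (hasImpCycle_of_mem_periodicPts (μ' := μ') hm hir (fun k => ?_) (fun k => ?_))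
  · rw [← iterate_add_apply]
    exact hfμ _ (horbit _)
  · rw [← iterate_add_apply]
    exact horbit _

end Efficiency

theorem EAM_maximal_and_efficient_general
    (q : S → ℕ) (L : List I) (hcomp : ∀ i : I, i ∈ L)
    (ψ : Mechanism I S) (hψ : IsEAMMech q L ψ) :
    MaximalMech q ψ ∧ ∀ P : Prof I S, Efficient P q (ψ P) := by
  have key : ∀ P : Prof I S, Feasible q (ψ P) ∧ IndivRational P (ψ P) ∧
      MaximalMatching P q (ψ P) := fun P => by
    obtain ⟨μ₀, hμ₀, hsteps, -⟩ := hψ P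
    obtain ⟨hf₀, hir₀, hmax₀⟩ := maximalMatching_of_mem_xiList hcomp hμ₀
    obtain ⟨hf, hir, hsize⟩ := reflTransGen_implementStep hsteps hf₀ hir₀
    exact ⟨hf, hir, fun μ' hf' hir' => (hmax₀ μ' hf' hir').trans hsize⟩
  refine ⟨⟨fun P => ⟨(key P).1, (key P).2.1⟩, fun P => (key P).2.2⟩, fun P => ?_⟩
  obtain ⟨-, -, -, hnc, hncy⟩ := hψ P
  exact efficient_of_not_hasImpChain_of_not_hasImpCycle (key P).2.1 hnc hncy

/-- every EAM mechanism is maximal and Pareto efficient. -/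
theorem EAM_maximal_and_efficient
    (q : S → ℕ) (L : List I) (hnd : L.Nodup) (hcomp : ∀ i : I, i ∈ L)
    (ψ : Mechanism I S) (hψ : IsEAMMech q L ψ) :
    MaximalMech q ψ ∧ ∀ P : Prof I S, Efficient P q (ψ P) :=
  EAM_maximal_and_efficient_general q L hcomp ψ hψ
end

section
/- Every FAM mechanism is individually rational, maximal, and fair for unassigned students: starting from a maximal individually rational matching and iteratively resolving priority violations by unassigned students (placing the violating unassigned student at the school and removing the lowest-priority student currently assigned there), the procedure terminates in finitely many steps with a matching that is individually rational, maximal, and admits no pair (i,s) with i unassigned, s acceptable to i, and i having higher priority at s than some student matched to s. -/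
open Finset
open scoped Classical

variable {I S : Type*} [Fintype I] [DecidableEq I] [Fintype S] [DecidableEq S]

variable {I S : Type*} [Fintype I] [DecidableEq I] [Fintype S] [DecidableEq S]

/-!
A fairness step exchanges the assignments of the unassigned student `i` and the lowest-priority
student `j` at `s`, i.e. it replaces `μ` by `μ ∘ swap i j`. Hence it keeps the number of students
at every school and the number of assigned students, so feasibility and maximality survive, and
individual rationality survives because `i` finds `s` acceptable. Since `i` has higher priority
at `s` than `j`, the sum of the priorities of the assigned students strictly increases, and
there are only finitely many matchings, so the procedure terminates.
-/

namespace Relation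

variable {α : Type*} {r : α → α → Prop}

theorem exists_reflTransGen_of_wellFounded (hwf : WellFounded (flip r)) {T : α → Prop}
    (hstep : ∀ a, ¬ T a → ∃ b, r a b) (a : α) : ∃ b, ReflTransGen r a b ∧ T b := by
  obtain ⟨b, hab, hmin⟩ := hwf.has_min {b | ReflTransGen r a b} ⟨a, .refl⟩
  refine ⟨b, hab, by_contra fun hT => ?_⟩
  obtain ⟨c, hbc⟩ := hstep b hT
  exact hmin c (hab.tail hbc) hbc

end Relation

theorem wellFounded_flip_of_lt_of_finite {α : Type*} [Finite α] {r : α → α → Prop}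
    (f : α → ℕ) (hf : ∀ a b, r a b → f a < f b) : WellFounded (flip r) := by
  obtain ⟨B, hB⟩ := (Set.finite_range f).bddAbove
  refine Subrelation.wf (fun {b a} hab => ?_) (measure fun a => B - f a).wf
  have hlt : f a < f b := hf a b hab
  have hle : f b ≤ B := hB (Set.mem_range_self b)
  show B - f b < B - f a
  omega

theorem Finset.card_filter_comp_perm {α : Type*} [Fintype α] (σ : Equiv.Perm α) (p : α → Prop)
    [DecidablePred p] : #{k | p (σ k)} = #{k | p k} :=
  card_equiv σ (by simp)

theorem Finset.sum_add_pair_eq_of_eq_off_pair {ι M : Type*} [Fintype ι] [DecidableEq ι]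
    [AddCommMonoid M] {f g : ι → M} {i j : ι} (hij : i ≠ j) (h : ∀ k, k ≠ i → k ≠ j → g k = f k) :
    ∑ k, g k + (f i + f j) = ∑ k, f k + (g i + g j) := by
  have split (u : ι → M) : ∑ k, u k = ∑ k ∈ univ \ {i, j}, u k + (u i + u j) := by
    rw [← sum_pair hij, sum_sdiff (subset_univ _)]
  rw [split f, split g, sum_congr rfl fun k hk => h k (by aesop) (by aesop)]
  abel

noncomputable def assignedPrioritySum (pr : Prio I S) (μ : Matching I S) : ℕ :=
  ∑ k, (μ k).elim 0 fun s => pr.1 s k + 1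

namespace FairStep

variable {P : Prof I S} {pr : Prio I S} {q : S → ℕ} {μ μ' : Matching I S}

omit [Fintype I] [Fintype S] [DecidableEq S] in
theorem exists_eq_comp_swap (h : FairStep P pr μ μ') :
    ∃ i s j, i ≠ j ∧ μ i = none ∧ μ j = some s ∧ (P i).1 none < (P i).1 (some s) ∧
      pr.1 s j < pr.1 s i ∧ μ' = μ ∘ Equiv.swap i j := by
  obtain ⟨i, s, j, hi, hpref, hj, hlt, -, rfl⟩ := h
  have hij : i ≠ j := by rintro rfl; simp_all
  exact ⟨i, s, j, hij, hi, hj, hpref, hlt, by rw [Equiv.comp_swap_eq_update, hi, hj]⟩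

omit [Fintype S] [DecidableEq S] in
theorem msize_eq (h : FairStep P pr μ μ') : msize μ' = msize μ := by
  obtain ⟨i, s, j, -, -, -, -, -, rfl⟩ := h.exists_eq_comp_swap
  exact card_filter_comp_perm (Equiv.swap i j) fun k => μ k ≠ none

omit [Fintype S] in
theorem feasible (h : FairStep P pr μ μ') (hF : Feasible q μ) : Feasible q μ' := by
  obtain ⟨i, s, j, -, -, -, -, -, rfl⟩ := h.exists_eq_comp_swap
  exact fun t => (card_filter_comp_perm (Equiv.swap i j) fun k => μ k = some t).trans_le (hF t)

omit [Fintype I] [Fintype S] [DecidableEq S] in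
theorem indivRational (h : FairStep P pr μ μ') (hIR : IndivRational P μ) :
    IndivRational P μ' := by
  obtain ⟨i, s, j, hij, hi, hj, hpref, -, rfl⟩ := h.exists_eq_comp_swap
  intro k
  rcases eq_or_ne k i with rfl | hki
  · simpa [hj] using hpref.le
  rcases eq_or_ne k j with rfl | hkj
  · simp [hi]
  · simpa [Equiv.swap_apply_of_ne_of_ne hki hkj] using hIR k

omit [Fintype S] [DecidableEq S] in
theorem assignedPrioritySum_lt (h : FairStep P pr μ μ') :
    assignedPrioritySum pr μ < assignedPrioritySum pr μ' := by
  obtain ⟨i, s, j, hij, hi, hj, -, hlt, rfl⟩ := h.exists_eq_comp_swap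
  have hsum := sum_add_pair_eq_of_eq_off_pair (f := fun k => (μ k).elim 0 fun s => pr.1 s k + 1)
    (g := fun k => ((μ ∘ Equiv.swap i j) k).elim 0 fun s => pr.1 s k + 1) hij
    fun k hki hkj => by simp [Equiv.swap_apply_of_ne_of_ne hki hkj]
  simp only [Function.comp_apply, Equiv.swap_apply_left, Equiv.swap_apply_right, hi, hj,
    Option.elim_none, Option.elim_some] at hsum
  simp only [assignedPrioritySum, Function.comp_apply]
  omega

end FairStep

omit [Fintype S] in
theorem Relation.ReflTransGen.fairStep_invariant {P : Prof I S} {pr : Prio I S} {q : S → ℕ}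
    {μ μ' : Matching I S} (h : Relation.ReflTransGen (FairStep P pr) μ μ')
    (hF : Feasible q μ) (hIR : IndivRational P μ) :
    Feasible q μ' ∧ IndivRational P μ' ∧ msize μ' = msize μ := by
  induction h with
  | refl => exact ⟨hF, hIR, rfl⟩
  | tail _ step ih =>
    obtain ⟨hF', hIR', hsize⟩ := ih
    exact ⟨step.feasible hF', step.indivRational hIR', step.msize_eq.trans hsize⟩

omit [Fintype S] in
theorem exists_fairStep_of_not_fairForUnassigned {P : Prof I S} {pr : Prio I S}
    {μ : Matching I S} (h : ¬ FairForUnassigned P pr μ) : ∃ μ', FairStep P pr μ μ' := by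
  obtain ⟨i, s, j, hi, hpref, hj, hlt⟩ := not_not.mp h
  obtain ⟨j₀, hj₀, hmin⟩ := exists_min_image {k | μ k = some s} (pr.1 s) ⟨j, by simpa using hj⟩
  exact ⟨_, i, s, j₀, hi, hpref, by simpa using hj₀, (hmin j (by simpa using hj)).trans_lt hlt,
    fun k hk => hmin k (by simpa using hk), rfl⟩

/-- starting from any maximal individually rational matching,
the fairness step of FAM terminates, and every terminal matching (one that
is fair for unassigned students) reached by iterated fairness steps is
individually rational, feasible, maximal, and fair for unassigned
students. -/
theorem FAM_ir_maximal_fair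
    (P : Prof I S) (pr : Prio I S) (q : S → ℕ) (μ₀ : Matching I S)
    (hF : Feasible q μ₀) (hIR : IndivRational P μ₀)
    (hMax : MaximalMatching P q μ₀) :
    (∃ μ, Relation.ReflTransGen (FairStep P pr) μ₀ μ ∧
      FairForUnassigned P pr μ) ∧
    ∀ μ, Relation.ReflTransGen (FairStep P pr) μ₀ μ →
      FairForUnassigned P pr μ →
      Feasible q μ ∧ IndivRational P μ ∧ MaximalMatching P q μ ∧
        FairForUnassigned P pr μ := by
  have hwf : WellFounded (flip (FairStep P pr)) :=
    wellFounded_flip_of_lt_of_finite (assignedPrioritySum pr) fun _ _ h => h.assignedPrioritySum_lt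
  refine ⟨Relation.exists_reflTransGen_of_wellFounded hwf
    (fun _ => exists_fairStep_of_not_fairForUnassigned) μ₀, fun μ hreach hfair => ?_⟩
  obtain ⟨hFμ, hIRμ, hsize⟩ := hreach.fairStep_invariant hF hIR
  exact ⟨hFμ, hIRμ, fun μ' hF' hIR' => hsize ▸ hMax μ' hF' hIR', hfair⟩
end

section
/- For an EAM mechanism, the strategy profile in which each student reports as acceptable only the school assigned to them by the serial dictatorship (with the same student ordering used by the EAM mechanism) under true preferences is a Nash equilibrium of the preference-reporting game, and every Nash equilibrium outcome of the EAM mechanism coincides with the serial dictatorship outcome under true preferences. -/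
open Finset
open scoped Classical

variable {I S : Type*} [Fintype I] [DecidableEq I] [Fintype S] [DecidableEq S]

variable {I S : Type*} [Fintype I] [DecidableEq I] [Fintype S] [DecidableEq S]

/-!
If every student reports her serial dictatorship school as the only acceptable one, the first
stage of EAM can only select the serial dictatorship matching, and no improving chain or cycle
moves a student who already holds her top choice. A deviating student `i` therefore still
finds the students before her in their serial dictatorship schools, and by feasibility she can
only obtain a school that was still free when her turn came in serial dictatorship.

Conversely, let `P` be an equilibrium and suppose the students before `i` receive their serial
dictatorship schools. Feasibility again caps `i` at her serial dictatorship school `s`. On the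
other hand, if `i` reports `s` as her only acceptable school, the matching seating the earlier
students as before and `i` at `s` survives the first-stage refinements preceding `i`, since
those refinements do not depend on `i`'s report; so the refinement for `i` assigns her `s`, and
she keeps it. Induction along the enumeration gives the equality of outcomes.
-/

theorem List.forall_mem_of_forall_prefix {α : Type*} {p : α → Prop} (L : List α)
    (h : ∀ L₁ i L₂, L = L₁ ++ i :: L₂ → (∀ j ∈ L₁, p j) → p i) : ∀ j ∈ L, p j := by
  induction L with
  | nil => simp
  | cons a L ih =>
    have ha : p a := h [] a L rfl (by simp)
    refine List.forall_mem_cons.2 ⟨ha, ih fun L₁ i L₂ hL hpre => ?_⟩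
    exact h (a :: L₁) i L₂ (by rw [hL]; rfl) (List.forall_mem_cons.2 ⟨ha, hpre⟩)

theorem List.Nodup.card_filter_toFinset {α : Type*} [DecidableEq α] {l : List α} (hl : l.Nodup)
    (p : α → Prop) [DecidablePred p] : (l.toFinset.filter p).card = l.countP p := by
  rw [List.countP_eq_length_filter, ← List.toFinset_card_of_nodup (hl.filter _),
    List.toFinset_filter]
  simp

theorem List.Nodup.notMem_of_append_cons {α : Type*} {L₁ L₂ : List α} {i : α}
    (h : (L₁ ++ i :: L₂).Nodup) : i ∉ L₁ :=
  fun hi => List.disjoint_of_nodup_append h hi List.mem_cons_self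

section Preferences

variable {S : Type*}

def AcceptsOnly (f : IndPref S) (c : Option S) : Prop :=
  ∀ s : S, f.1 none < f.1 (some s) ↔ some s = c

namespace AcceptsOnly

variable {f : IndPref S} {c : Option S}

theorem apply_le (h : AcceptsOnly f c) (x : Option S) : f.1 x ≤ f.1 c := by
  have hc : f.1 none ≤ f.1 c := by
    cases c with
    | none => rfl
    | some s => exact ((h s).2 rfl).le
  cases x with
  | none => exact hc
  | some s =>
    by_cases hs : some s = c
    · rw [hs]
    · exact (not_lt.1 (mt (h s).1 hs)).trans hc

theorem eq_none_or_eq (h : AcceptsOnly f c) {x : Option S} (hx : f.1 none ≤ f.1 x) :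
    x = none ∨ x = c := by
  cases x with
  | none => exact Or.inl rfl
  | some s => exact Or.inr ((h s).1 (hx.lt_of_ne (f.2.ne (by simp))))

end AcceptsOnly

variable [Fintype S]

noncomputable def onlyPref (c : Option S) : IndPref S :=
  ⟨fun x => if x = c then Fintype.card (Option S) + 1
    else if x = none then Fintype.card (Option S) else Fintype.equivFin (Option S) x, by
    intro x y hxy
    have hx := (Fintype.equivFin (Option S) x).isLt
    have hy := (Fintype.equivFin (Option S) y).isLt
    simp only at hxy
    split_ifs at hxy <;> subst_vars <;> try rfl
    all_goals first | omega | exact (Fintype.equivFin _).injective (Fin.ext hxy)⟩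

theorem acceptsOnly_onlyPref (c : Option S) : AcceptsOnly (onlyPref c) c := by
  intro s
  have hs := (Fintype.equivFin (Option S) (some s)).isLt
  by_cases hsc : some s = c
  · subst hsc
    simp [onlyPref]
  · have hsome : (onlyPref c).1 (some s) = Fintype.equivFin _ (some s) := by
      simp [onlyPref, hsc]
    have hnone : Fintype.card (Option S) ≤ (onlyPref c).1 none := by
      simp only [onlyPref]
      split_ifs <;> omega
    simp only [hsc, iff_false, not_lt, hsome]
    omega

end Preferences

section ImprovementSteps

variable {I S : Type*}

noncomputable def cyclePerm {n : ℕ} (a : Fin (n + 1) → I) (ha : Function.Injective a) :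
    Equiv.Perm I :=
  (finRotate (n + 1)).extendDomain (Equiv.ofInjective a ha)

theorem cyclePerm_apply_self {n : ℕ} {a : Fin (n + 1) → I} (ha : Function.Injective a)
    (k : Fin (n + 1)) : cyclePerm a ha (a k) = a (k + 1) := by
  simpa [cyclePerm, finRotate_apply] using
    (finRotate (n + 1)).extendDomain_apply_image (Equiv.ofInjective a ha) k

theorem cyclePerm_apply_of_notMem {n : ℕ} {a : Fin (n + 1) → I} (ha : Function.Injective a)
    {j : I} (hj : j ∉ Set.range a) : cyclePerm a ha j = j :=
  Equiv.Perm.extendDomain_apply_not_subtype _ _ hj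

variable [Fintype I] [DecidableEq S] {Q : Prof I S} {q : S → ℕ} {μ μ' : Matching I S}

theorem card_filter_le_of_injective {s : S} (σ : I → I) (hσ : Function.Injective σ)
    (h : ∀ j, μ' j = some s → μ (σ j) = some s) :
    (univ.filter fun j => μ' j = some s).card ≤ (univ.filter fun j => μ j = some s).card :=
  card_le_card_of_injOn σ (fun j hj => by simpa using h j (by simpa using hj)) hσ.injOn

theorem Feasible.of_eq_of_ne_none {ν : Matching I S} (hμ : Feasible q μ)
    (h : ∀ j, ν j ≠ none → ν j = μ j) : Feasible q ν := fun s =>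
  (card_filter_le_of_injective id Function.injective_id fun j hj =>
    (h j (by simp [hj])) ▸ hj).trans (hμ s)

theorem ImplementStep.feasible_s8 (hstep : ImplementStep Q q μ μ') (hμ : Feasible q μ) :
    Feasible q μ' := by
  intro s
  rcases hstep with ⟨n, a, t, ⟨ha, -, hnext, hlast⟩, hmove, hrest⟩ |
    ⟨n, a, t, ⟨ha, hat, -⟩, hmove, hrest⟩
  · -- along a chain, `a k` takes the seat of `a (k + 1)`; only `a n` needs a free seat
    have hseat : ∀ j, μ' j = some s →
        μ (cyclePerm a ha j) = some s ∨ (j = a (Fin.last n) ∧ t (Fin.last n) = s) := by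
      intro j hj
      by_cases hja : j ∈ Set.range a
      · obtain ⟨k, rfl⟩ := hja
        rw [hmove k, Option.some_inj] at hj
        by_cases hk : k = Fin.last n
        · exact Or.inr ⟨hk ▸ rfl, hk ▸ hj⟩
        obtain ⟨k, rfl⟩ := Fin.exists_castSucc_eq.2 hk
        rw [cyclePerm_apply_self, Fin.coeSucc_eq_succ, hnext, hj]
        exact Or.inl rfl
      · rw [cyclePerm_apply_of_notMem ha hja, ← hrest j fun k hk => hja ⟨k, hk.symm⟩]
        exact Or.inl hj
    by_cases hs : t (Fin.last n) = s
    · subst hs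
      calc (univ.filter fun j => μ' j = some (t (Fin.last n))).card
          ≤ (insert (cyclePerm a ha (a (Fin.last n)))
              (univ.filter fun j => μ j = some (t (Fin.last n)))).card := by
            refine card_le_card_of_injOn (cyclePerm a ha) (fun j hj => ?_)
              (cyclePerm a ha).injective.injOn
            rcases hseat j (by simpa using hj) with h | ⟨rfl, -⟩
            · simp [h]
            · simp
        _ ≤ _ := card_insert_le _ _
        _ ≤ _ := hlast
    · refine (card_filter_le_of_injective (cyclePerm a ha) (cyclePerm a ha).injective
        fun j hj => ?_).trans (hμ s)
      exact (hseat j hj).resolve_right fun h => hs h.2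
  · -- a cycle permutes the seats it uses
    refine (card_filter_le_of_injective (cyclePerm a ha) (cyclePerm a ha).injective
        fun j hj => ?_).trans (hμ s)
    by_cases hja : j ∈ Set.range a
    · obtain ⟨k, rfl⟩ := hja
      rwa [cyclePerm_apply_self, hat, ← hmove]
    · rwa [cyclePerm_apply_of_notMem ha hja, ← hrest j fun k hk => hja ⟨k, hk.symm⟩]

theorem ImplementStep.apply_le (hstep : ImplementStep Q q μ μ') (j : I) :
    (Q j).1 (μ j) ≤ (Q j).1 (μ' j) := by
  rcases hstep with ⟨n, a, t, ⟨-, himp, -⟩, hmove, hrest⟩ |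
    ⟨n, a, t, ⟨-, hat, himp⟩, hmove, hrest⟩
  all_goals
    by_cases hja : j ∈ Set.range a
    swap
    · rw [hrest j fun k hk => hja ⟨k, hk.symm⟩]
    obtain ⟨k, rfl⟩ := hja
  · rw [hmove]
    exact (himp k).le
  · rw [hmove, hat]
    exact (himp k).le

theorem ImplementStep.ne_none (hstep : ImplementStep Q q μ μ') {j : I} (hj : μ j ≠ none) :
    μ' j ≠ none := by
  rcases hstep with ⟨n, a, t, -, hmove, hrest⟩ | ⟨n, a, t, -, hmove, hrest⟩
  all_goals
    by_cases hja : j ∈ Set.range a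
    · obtain ⟨k, rfl⟩ := hja
      simp [hmove]
    · rwa [hrest j fun k hk => hja ⟨k, hk.symm⟩]

variable {μ₀ : Matching I S}

theorem feasible_of_reflTransGen (h : Relation.ReflTransGen (ImplementStep Q q) μ₀ μ)
    (h₀ : Feasible q μ₀) : Feasible q μ := by
  induction h with
  | refl => exact h₀
  | tail _ hstep ih => exact hstep.feasible_s8 ih

theorem apply_le_of_reflTransGen (h : Relation.ReflTransGen (ImplementStep Q q) μ₀ μ) (j : I) :
    (Q j).1 (μ₀ j) ≤ (Q j).1 (μ j) := by
  induction h with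
  | refl => rfl
  | tail _ hstep ih => exact ih.trans (hstep.apply_le j)

theorem ne_none_of_reflTransGen (h : Relation.ReflTransGen (ImplementStep Q q) μ₀ μ) {j : I}
    (hj : μ₀ j ≠ none) : μ j ≠ none := by
  induction h with
  | refl => exact hj
  | tail _ hstep ih => exact hstep.ne_none ih

theorem indivRational_of_reflTransGen (h : Relation.ReflTransGen (ImplementStep Q q) μ₀ μ)
    (h₀ : IndivRational Q μ₀) : IndivRational Q μ :=
  fun j => (h₀ j).trans (apply_le_of_reflTransGen h j)

theorem apply_eq_of_reflTransGen (h : Relation.ReflTransGen (ImplementStep Q q) μ₀ μ) {j : I}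
    (htop : ∀ x, (Q j).1 x ≤ (Q j).1 (μ₀ j)) : μ j = μ₀ j :=
  (Q j).2 ((htop _).antisymm (apply_le_of_reflTransGen h j))

end ImprovementSteps

section FirstStage

variable {I S : Type*} [Fintype I] [DecidableEq I] [Fintype S] {A B : Set (Matching I S)}

theorem xiStep_of_exists {i : I} (h : ∃ μ ∈ A, μ i ≠ none) :
    xiStep A i = {μ ∈ A | μ i ≠ none} :=
  if_pos h

theorem xiStep_of_not_exists {i : I} (h : ¬∃ μ ∈ A, μ i ≠ none) : xiStep A i = A :=
  if_neg h

theorem xiStep_subset (A : Set (Matching I S)) (i : I) : xiStep A i ⊆ A := by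
  by_cases h : ∃ μ ∈ A, μ i ≠ none
  · rw [xiStep_of_exists h]
    exact Set.sep_subset _ _
  · rw [xiStep_of_not_exists h]

theorem foldl_xiStep_subset_s8 (M : List I) (A : Set (Matching I S)) : M.foldl xiStep A ⊆ A := by
  induction M generalizing A with
  | nil => exact subset_rfl
  | cons j M ih => exact (ih _).trans (xiStep_subset A j)

theorem mem_foldl_xiStep_of_ne_none {M : List I} {μ ν : Matching I S}
    (hμ : μ ∈ M.foldl xiStep A) (hν : ν ∈ A)
    (hμν : ∀ j ∈ M, μ j ≠ none → ν j ≠ none) :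
    ν ∈ M.foldl xiStep A := by
  induction M generalizing A with
  | nil => exact hν
  | cons j M ih =>
    rw [List.foldl_cons] at hμ ⊢
    refine ih hμ ?_ fun j' hj' => hμν j' (List.mem_cons_of_mem _ hj')
    by_cases h : ∃ μ ∈ A, μ j ≠ none
    · rw [xiStep_of_exists h] at hμ ⊢
      exact ⟨hν, hμν j List.mem_cons_self (foldl_xiStep_subset_s8 M _ hμ).2⟩
    · rwa [xiStep_of_not_exists h]

theorem ne_none_of_mem_foldl_xiStep_append_cons {L₁ L₂ : List I} {i : I} {μ ν : Matching I S}
    (hμ : μ ∈ (L₁ ++ i :: L₂).foldl xiStep A) (hν : ν ∈ L₁.foldl xiStep A)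
    (hνi : ν i ≠ none) :
    μ i ≠ none := by
  rw [List.foldl_append, List.foldl_cons, xiStep_of_exists ⟨ν, hν, hνi⟩] at hμ
  exact (foldl_xiStep_subset_s8 L₂ _ hμ).2

theorem ne_none_of_mem_foldl_xiStep_s8 {M : List I} {w : Matching I S} (hw : w ∈ A)
    (hmax : ∀ j ∈ M, ∀ μ ∈ A, μ j ≠ none → w j ≠ none) {μ : Matching I S}
    (hμ : μ ∈ M.foldl xiStep A) : ∀ j ∈ M, w j ≠ none → μ j ≠ none := by
  induction M generalizing A with
  | nil => simp
  | cons j M ih =>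
    have hmax' := fun j' hj' => hmax j' (List.mem_cons_of_mem j hj')
    by_cases hwj : w j ≠ none
    · rw [List.foldl_cons, xiStep_of_exists ⟨w, hw, hwj⟩] at hμ
      refine List.forall_mem_cons.2 ⟨fun _ => (foldl_xiStep_subset_s8 M _ hμ).2, ?_⟩
      exact ih (A := {ν ∈ A | ν j ≠ none}) ⟨hw, hwj⟩
        (fun j' hj' ν hν => hmax' j' hj' ν hν.1) hμ
    · have hnone : ¬∃ ν ∈ A, ν j ≠ none := fun ⟨ν, hν, hνj⟩ =>
        hwj (hmax j List.mem_cons_self ν hν hνj)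
      rw [List.foldl_cons, xiStep_of_not_exists hnone] at hμ
      exact List.forall_mem_cons.2 ⟨fun h => absurd h hwj, ih hw hmax' hμ⟩

theorem map_mem_foldl_xiStep {M : List I} (f : Matching I S → Matching I S)
    (hf : ∀ μ, ∀ j ∈ M, f μ j = none ↔ μ j = none)
    (hAB : ∀ μ ∈ A, f μ ∈ B) (hBA : ∀ μ ∈ B, f μ ∈ A) :
    ∀ μ ∈ M.foldl xiStep A, f μ ∈ M.foldl xiStep B := by
  induction M generalizing A B with
  | nil => exact hAB
  | cons j M ih =>
    have hf' := fun μ j' hj' => hf μ j' (List.mem_cons_of_mem j hj')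
    have hfj : ∀ μ, f μ j ≠ none ↔ μ j ≠ none := fun μ =>
      (hf μ j List.mem_cons_self).not
    by_cases h : ∃ μ ∈ A, μ j ≠ none
    · have h' : ∃ μ ∈ B, μ j ≠ none :=
        let ⟨μ, hμ, hμj⟩ := h; ⟨f μ, hAB μ hμ, (hfj μ).2 hμj⟩
      rw [List.foldl_cons, List.foldl_cons, xiStep_of_exists h, xiStep_of_exists h']
      exact ih hf' (fun μ hμ => ⟨hAB μ hμ.1, (hfj μ).2 hμ.2⟩)
        (fun μ hμ => ⟨hBA μ hμ.1, (hfj μ).2 hμ.2⟩)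
    · have h' : ¬∃ μ ∈ B, μ j ≠ none := fun ⟨μ, hμ, hμj⟩ =>
        h ⟨f μ, hBA μ hμ, (hfj μ).2 hμj⟩
      rw [List.foldl_cons, List.foldl_cons, xiStep_of_not_exists h, xiStep_of_not_exists h']
      exact ih hf' hAB hBA

end FirstStage

section SerialDictatorship

variable {I S : Type*} [Fintype S] [DecidableEq S] (P : Prof I S)

noncomputable def sdPick (i : I) (rem : S → ℕ) : Option S :=
  bestOf (P i).1 (insert none ((univ.filter fun s => 0 < rem s).image some)) (insert_nonempty _ _)

theorem sdPick_mem (i : I) (rem : S → ℕ) :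
    sdPick P i rem ∈ insert none ((univ.filter fun s => 0 < rem s).image some) :=
  (exists_max_image _ _ (insert_nonempty _ _)).choose_spec.1

variable {P}

theorem sdPick_pos {i : I} {rem : S → ℕ} {s : S} (h : sdPick P i rem = some s) : 0 < rem s := by
  simpa [h] using sdPick_mem P i rem

theorem le_sdPick {i : I} {rem : S → ℕ} {x : Option S} (hx : ∀ s, x = some s → 0 < rem s) :
    (P i).1 x ≤ (P i).1 (sdPick P i rem) := by
  refine (exists_max_image _ (P i).1 (insert_nonempty _ _)).choose_spec.2 x ?_
  cases x with
  | none => exact mem_insert_self _ _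
  | some s => simpa using hx s rfl

variable [DecidableEq I]

theorem sdRun_cons (i : I) (M : List I) (rem : S → ℕ) (μ : Matching I S) :
    sdRun P (i :: M) rem μ =
      sdRun P M (fun s => if sdPick P i rem = some s then rem s - 1 else rem s)
        (Function.update μ i (sdPick P i rem)) :=
  rfl

theorem sdRun_apply_of_notMem {M : List I} {j : I} (hj : j ∉ M) (rem : S → ℕ)
    (μ : Matching I S) : sdRun P M rem μ j = μ j := by
  induction M generalizing rem μ with
  | nil => rfl
  | cons i M ih =>
    rw [sdRun_cons, ih (List.not_mem_of_not_mem_cons hj),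
      Function.update_of_ne (List.ne_of_not_mem_cons hj)]

theorem sdRun_cons_apply_self {i : I} {M : List I} (hi : i ∉ M) (rem : S → ℕ)
    (μ : Matching I S) : sdRun P (i :: M) rem μ i = sdPick P i rem := by
  rw [sdRun_cons, sdRun_apply_of_notMem hi, Function.update_self]

theorem countP_sdRun_le {M : List I} (hM : M.Nodup) (rem : S → ℕ) (μ : Matching I S) (s : S) :
    M.countP (fun j => sdRun P M rem μ j = some s) ≤ rem s := by
  induction M generalizing rem μ with
  | nil => simp
  | cons i M ih =>
    obtain ⟨hiM, hM⟩ := List.nodup_cons.1 hM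
    have hrest := ih hM (fun s => if sdPick P i rem = some s then rem s - 1 else rem s)
      (Function.update μ i (sdPick P i rem))
    rw [List.countP_cons, sdRun_cons_apply_self hiM, sdRun_cons]
    by_cases hs : sdPick P i rem = some s
    · have := sdPick_pos hs
      simp only [hs, if_true, decide_true] at hrest ⊢
      omega
    · simpa [hs] using hrest

theorem le_sdRun_apply {L₁ L₂ : List I} {i : I} (hL : (L₁ ++ i :: L₂).Nodup)
    {rem : S → ℕ} {μ : Matching I S} {x : Option S}
    (hx : ∀ s, x = some s →
      L₁.countP (fun j => sdRun P (L₁ ++ i :: L₂) rem μ j = some s) < rem s) :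
    (P i).1 x ≤ (P i).1 (sdRun P (L₁ ++ i :: L₂) rem μ i) := by
  induction L₁ generalizing rem μ with
  | nil =>
    rw [List.nil_append, sdRun_cons_apply_self (List.nodup_cons.1 hL).1]
    exact le_sdPick fun s hs => by simpa using hx s hs
  | cons j L₁ ih =>
    rw [List.cons_append] at hL hx ⊢
    obtain ⟨hj, hL⟩ := List.nodup_cons.1 hL
    rw [sdRun_cons]
    refine ih hL fun s hs => ?_
    have hxs := hx s hs
    rw [List.countP_cons, sdRun_cons_apply_self hj, sdRun_cons] at hxs
    by_cases hjs : sdPick P j rem = some s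
    · simp only [hjs, if_true, decide_true] at hxs ⊢
      omega
    · simpa [hjs] using hxs

variable [Fintype I]

theorem SD_feasible (u : Prof I S) (q : S → ℕ) {L : List I} (hnd : L.Nodup)
    (hcomp : ∀ i, i ∈ L) : Feasible q (SD u q L) := by
  intro s
  have huniv : L.toFinset = univ := eq_univ_iff_forall.2 fun i => List.mem_toFinset.2 (hcomp i)
  rw [← huniv, hnd.card_filter_toFinset]
  exact countP_sdRun_le hnd q _ s

theorem le_SD_of_eqOn_prefix (u : Prof I S) (q : S → ℕ) {L L₁ L₂ : List I} {i : I}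
    (hnd : L.Nodup) (hL : L = L₁ ++ i :: L₂) {μ : Matching I S} (hμ : Feasible q μ)
    (hpre : ∀ j ∈ L₁, μ j = SD u q L j) : (u i).1 (μ i) ≤ (u i).1 (SD u q L i) := by
  subst hL
  refine le_sdRun_apply hnd fun s hs => ?_
  have hle : (L₁ ++ [i]).countP (fun j => μ j = some s) ≤ q s := by
    rw [← (hnd.sublist (by simp)).card_filter_toFinset]
    exact (card_le_card (filter_subset_filter _ (subset_univ _))).trans (hμ s)
  calc L₁.countP (fun j => SD u q (L₁ ++ i :: L₂) j = some s)
      = L₁.countP (fun j => μ j = some s) := List.countP_congr fun j hj => by simp [hpre j hj]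
    _ < q s := by simpa [List.countP_append, hs, Nat.add_one_le_iff] using hle

end SerialDictatorship

section EAM

variable {I S : Type*} [Fintype I] [DecidableEq I] [DecidableEq S] {q : S → ℕ}
  {μ : Matching I S}

theorem feasible_indivRational_update_none {Q : Prof I S} {i : I} (hμ : Feasible q μ)
    (hir : ∀ j ≠ i, (Q j).1 none ≤ (Q j).1 (μ j)) :
    Feasible q (Function.update μ i none) ∧ IndivRational Q (Function.update μ i none) := by
  refine ⟨hμ.of_eq_of_ne_none fun j hj => ?_, fun j => ?_⟩
  · rw [Function.update_of_ne fun h => hj (by simp [h])]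
  · by_cases hji : j = i
    · subst hji
      simp
    · rw [Function.update_of_ne hji]
      exact hir j hji

variable [Fintype S] {L : List I}

/-- The selection made for the students of `M` does not depend on the report of `i ∉ M`. -/
theorem update_none_mem_foldl_xiStep {P Q : Prof I S} {i : I} {M : List I} (hi : i ∉ M)
    (hPQ : ∀ j ≠ i, P j = Q j)
    (hμ : μ ∈ M.foldl xiStep {μ | Feasible q μ ∧ IndivRational P μ}) :
    Function.update μ i none ∈ M.foldl xiStep {μ | Feasible q μ ∧ IndivRational Q μ} :=
  map_mem_foldl_xiStep (Function.update · i none)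
    (fun μ j hj => by rw [Function.update_of_ne (ne_of_mem_of_not_mem hj hi)])
    (fun _ hμ => feasible_indivRational_update_none hμ.1 fun j hj => hPQ j hj ▸ hμ.2 j)
    (fun _ hμ => feasible_indivRational_update_none hμ.1 fun j hj => (hPQ j hj).symm ▸ hμ.2 j)
    μ hμ

namespace IsEAMOutcome

variable {Q : Prof I S}

theorem exists_reflTransGen (h : IsEAMOutcome Q q L μ) :
    ∃ μ₀ ∈ xiList Q q L, Relation.ReflTransGen (ImplementStep Q q) μ₀ μ :=
  let ⟨μ₀, hμ₀, hrtg, _⟩ := h; ⟨μ₀, hμ₀, hrtg⟩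

theorem feasible_s8 (h : IsEAMOutcome Q q L μ) : Feasible q μ :=
  let ⟨_, hμ₀, hrtg⟩ := h.exists_reflTransGen
  feasible_of_reflTransGen hrtg (foldl_xiStep_subset_s8 L _ hμ₀).1

theorem indivRational (h : IsEAMOutcome Q q L μ) : IndivRational Q μ :=
  let ⟨_, hμ₀, hrtg⟩ := h.exists_reflTransGen
  indivRational_of_reflTransGen hrtg (foldl_xiStep_subset_s8 L _ hμ₀).2

theorem eqOn_of_acceptsOnly {M R : List I} (hL : L = M ++ R) {c w : Matching I S}
    (hacc : ∀ j ∈ M, AcceptsOnly (Q j) (c j)) (hw : Feasible q w ∧ IndivRational Q w)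
    (hwc : ∀ j ∈ M, w j = c j) (h : IsEAMOutcome Q q L μ) : ∀ j ∈ M, μ j = c j := by
  obtain ⟨μ₀, hμ₀, hrtg⟩ := h.exists_reflTransGen
  rw [xiList, hL, List.foldl_append] at hμ₀
  have hμ₀M := foldl_xiStep_subset_s8 R _ hμ₀
  have hassigned := ne_none_of_mem_foldl_xiStep_s8 hw (fun j hj ν hν hνj => by
    rcases (hacc j hj).eq_none_or_eq (hν.2 j) with h | h
    · exact absurd h hνj
    · rwa [hwc j hj, ← h]) hμ₀M
  have hμ₀c : ∀ j ∈ M, μ₀ j = c j := fun j hj => by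
    rcases (hacc j hj).eq_none_or_eq ((foldl_xiStep_subset_s8 M _ hμ₀M).2 j) with h | h
    · by_contra hne
      exact hassigned j hj (by rw [hwc j hj]; exact h ▸ Ne.symm hne) h
    · exact h
  intro j hj
  rw [apply_eq_of_reflTransGen hrtg fun x => hμ₀c j hj ▸ (hacc j hj).apply_le x, hμ₀c j hj]

theorem eq_of_acceptsOnly (hcomp : ∀ i, i ∈ L) {c : Matching I S}
    (hacc : ∀ j, AcceptsOnly (Q j) (c j)) (hc : Feasible q c) (h : IsEAMOutcome Q q L μ) :
    μ = c :=
  funext fun j => h.eqOn_of_acceptsOnly L.append_nil.symm (fun j _ => hacc j)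
    ⟨hc, fun j => (hacc j).apply_le none⟩ (fun _ _ => rfl) j (hcomp j)

theorem apply_le_SD (u : Prof I S) (hnd : L.Nodup) (hcomp : ∀ i, i ∈ L) {i : I}
    (hQ : ∀ j ≠ i, AcceptsOnly (Q j) (SD u q L j)) (h : IsEAMOutcome Q q L μ) :
    (u i).1 (μ i) ≤ (u i).1 (SD u q L i) := by
  obtain ⟨L₁, L₂, hL⟩ := List.append_of_mem (hcomp i)
  have hne : ∀ j ∈ L₁, j ≠ i := fun j hj hji =>
    (hL ▸ hnd).notMem_of_append_cons (hji ▸ hj)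
  have hw := feasible_indivRational_update_none (SD_feasible u q hnd hcomp)
    fun j hji => (hQ j hji).apply_le none
  exact le_SD_of_eqOn_prefix u q hnd hL h.feasible_s8 <| h.eqOn_of_acceptsOnly hL
    (fun j hj => hQ j (hne j hj)) hw (fun j hj => Function.update_of_ne (hne j hj) _ _)

theorem apply_eq_SD_of_update_onlyPref (u : Prof I S) (hnd : L.Nodup) (hcomp : ∀ i, i ∈ L)
    {L₁ L₂ : List I} {i : I} (hL : L = L₁ ++ i :: L₂) (h : IsEAMOutcome Q q L μ)
    (hpre : ∀ j ∈ L₁, μ j = SD u q L j) {ν : Matching I S}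
    (hν : IsEAMOutcome (Function.update Q i (onlyPref (SD u q L i))) q L ν) :
    ν i = SD u q L i := by
  set Q' := Function.update Q i (onlyPref (SD u q L i))
  have hQ'i : AcceptsOnly (Q' i) (SD u q L i) := by
    simpa [Q'] using acceptsOnly_onlyPref (SD u q L i)
  have hQ'j : ∀ j ≠ i, Q j = Q' j := fun j hj => (Function.update_of_ne hj _ _).symm
  have hiL₁ : i ∉ L₁ := (hL ▸ hnd).notMem_of_append_cons
  obtain ⟨ν₀, hν₀, hrtgν⟩ := hν.exists_reflTransGen
  suffices hν₀i : ν₀ i = SD u q L i by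
    rw [apply_eq_of_reflTransGen hrtgν fun x => hν₀i ▸ hQ'i.apply_le x, hν₀i]
  refine (hQ'i.eq_none_or_eq ((foldl_xiStep_subset_s8 L _ hν₀).2 i)).elim (fun hnone => ?_) id
  rw [hnone]
  by_contra hne
  -- `w` survives the refinements for `L₁`, as it assigns whoever `μ₀` does there, so the
  -- refinement for `i` has to assign `i`
  set w : Matching I S := fun j => if j = i ∨ j ∈ L₁ then SD u q L j else none
  have hw : Feasible q w ∧ IndivRational Q' w := by
    refine ⟨(SD_feasible u q hnd hcomp).of_eq_of_ne_none fun j hj => ?_, fun j => ?_⟩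
    · simp only [w] at hj ⊢
      split_ifs at hj ⊢
      · rfl
      · exact absurd rfl hj
    · by_cases hji : j = i
      · subst hji
        simpa [w] using hQ'i.apply_le none
      by_cases hj : j ∈ L₁
      · simpa [w, hj, ← hQ'j j hji, ← hpre j hj] using h.indivRational j
      · simp [w, hji, hj]
  obtain ⟨μ₀, hμ₀, hrtgμ⟩ := h.exists_reflTransGen
  rw [xiList, hL, List.foldl_append] at hμ₀
  have hμ₀' := update_none_mem_foldl_xiStep hiL₁ hQ'j (foldl_xiStep_subset_s8 _ _ hμ₀)
  have hwL₁ : w ∈ L₁.foldl xiStep {μ | Feasible q μ ∧ IndivRational Q' μ} := by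
    refine mem_foldl_xiStep_of_ne_none hμ₀' hw fun j hj hμ₀j => ?_
    have hji : j ≠ i := ne_of_mem_of_not_mem hj hiL₁
    rw [Function.update_of_ne hji] at hμ₀j
    simpa [w, hj, ← hpre j hj] using ne_none_of_reflTransGen hrtgμ hμ₀j
  exact ne_none_of_mem_foldl_xiStep_append_cons (hL ▸ hν₀) hwL₁
    (by simpa [w] using Ne.symm hne) hnone

end IsEAMOutcome

theorem NashEq.apply_eq_SD {u P : Prof I S} {ψ : Mechanism I S} (hnash : NashEq u ψ P)
    (hψ : IsEAMMech q L ψ) (hnd : L.Nodup) (hcomp : ∀ i, i ∈ L) {L₁ L₂ : List I} {i : I}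
    (hL : L = L₁ ++ i :: L₂) (hpre : ∀ j ∈ L₁, ψ P j = SD u q L j) :
    ψ P i = SD u q L i := by
  have hdev := hnash i (onlyPref (SD u q L i))
  rw [(hψ P).apply_eq_SD_of_update_onlyPref u hnd hcomp hL hpre (hψ _)] at hdev
  exact (u i).2 ((le_SD_of_eqOn_prefix u q hnd hL (hψ P).feasible_s8 hpre).antisymm hdev)

end EAM

/-- under an EAM mechanism, any profile in which each student
reports as acceptable exactly the school assigned to them by the serial
dictatorship (same ordering, true preferences) is a Nash equilibrium, and
every Nash equilibrium outcome coincides with the serial dictatorship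
outcome under true preferences. -/
theorem EAM_equilibrium_is_SD
    (q : S → ℕ) (L : List I) (hnd : L.Nodup) (hcomp : ∀ i : I, i ∈ L)
    (ψ : Mechanism I S) (hψ : IsEAMMech q L ψ) (u : Prof I S) :
    (∀ P' : Prof I S,
      (∀ i s, (P' i).1 none < (P' i).1 (some s) ↔ some s = SD u q L i) →
        NashEq u ψ P') ∧
    ∀ P'' : Prof I S, NashEq u ψ P'' → ψ P'' = SD u q L := by
  refine ⟨fun P' hP' i Pi'' => ?_, fun P'' hnash => funext fun i => ?_⟩
  · rw [(hψ P').eq_of_acceptsOnly hcomp hP' (SD_feasible u q hnd hcomp)]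
    refine (hψ _).apply_le_SD u hnd hcomp fun j hj => ?_
    rw [Function.update_of_ne hj]
    exact hP' j
  · exact List.forall_mem_of_forall_prefix L
      (fun L₁ i L₂ hL hpre => hnash.apply_eq_SD hψ hnd hcomp hL hpre) i (hcomp i)
end

section
/- Let ψ be an EAM mechanism and φ an individually rational mechanism. For any problem P, if P' and P'' are Nash equilibria under ψ and φ respectively and |ψ(P')| < |φ(P'')|, then there exists a student i with ψ_i(P') P_i φ_i(P'') P_i ∅ (i is strictly better off under the EAM equilibrium outcome, which is itself acceptable-strictly above the φ outcome, which is acceptable). -/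
open Finset
open scoped Classical

variable {I S : Type*} [Fintype I] [DecidableEq I] [Fintype S] [DecidableEq S]

/-!
A school `s` receiving more students under `φ(P'')` than under `ψ(P')` has a free seat at
`ψ(P')`, and some student `i` sits at `s` under `φ(P'')` but not under `ψ(P')`. Since `φ` is
individually rational, `i` could get unassigned by rejecting every school, so `s` is truly
acceptable to `i`. Under EAM, declaring `s` as the only acceptable school secures `i` a seat at
`s`: when the first stage reaches `i`, the matching `ψ(P')` with `i` moved to `s` is feasible and
keeps every student guaranteed so far assigned (improving chains and cycles never unassign
anyone), so `i` is guaranteed a seat as well. Equilibrium then forces `i` to truly prefer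
`ψ(P') i` to `s`.
-/

section Development

variable {I S : Type*}

namespace IndPref

variable [Fintype S]

/-- Ties between tiers are broken by an enumeration of `Option S`. -/
noncomputable def ofTier (tier : Option S → ℕ) : IndPref S :=
  ⟨fun o => Fintype.equivFin (Option S) o + tier o * Fintype.card (Option S), by
    intro o o' h
    have hmod := congrArg (· % Fintype.card (Option S)) h
    simp only [Nat.add_mul_mod_self_right, Nat.mod_eq_of_lt (Fin.isLt _)] at hmod
    exact (Fintype.equivFin _).injective (Fin.ext hmod)⟩

theorem ofTier_lt_ofTier {tier : Option S → ℕ} {o o' : Option S} (h : tier o < tier o') :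
    (ofTier tier).1 o < (ofTier tier).1 o' := by
  have hcode := (Fintype.equivFin (Option S) o).isLt
  have htier := Nat.mul_le_mul_right (Fintype.card (Option S)) (Nat.succ_le_of_lt h)
  simp only [ofTier, Nat.succ_mul] at htier ⊢
  omega

noncomputable def rejectAll : IndPref S :=
  ofTier fun o => if o = none then 1 else 0

noncomputable def acceptOnly (s : S) : IndPref S :=
  ofTier fun o => if o = some s then 2 else if o = none then 1 else 0

theorem rejectAll_some_lt_none (t : S) :
    (rejectAll : IndPref S).1 (some t) < (rejectAll : IndPref S).1 none :=
  ofTier_lt_ofTier (by simp)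

theorem acceptOnly_none_lt_some (s : S) : (acceptOnly s).1 none < (acceptOnly s).1 (some s) :=
  ofTier_lt_ofTier (by simp)

theorem acceptOnly_some_lt_none {s t : S} (h : t ≠ s) :
    (acceptOnly s).1 (some t) < (acceptOnly s).1 none :=
  ofTier_lt_ofTier (by simp [h])

theorem eq_of_acceptOnly_none_le {s : S} {o : Option S} (ho : o ≠ none)
    (h : (acceptOnly s).1 none ≤ (acceptOnly s).1 o) : o = some s := by
  obtain ⟨t, rfl⟩ := Option.ne_none_iff_exists'.mp ho
  by_contra hts
  exact (acceptOnly_some_lt_none fun h => hts (congrArg some h)).not_ge h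

end IndPref

section Counting

variable [Fintype I] [Fintype S] [DecidableEq S]

theorem msize_eq_sum (μ : Matching I S) :
    msize μ = ∑ s : S, #{i | μ i = some s} := by
  simp only [msize, card_filter]
  rw [sum_comm]
  refine sum_congr rfl fun i _ => ?_
  cases μ i <;> simp

theorem exists_card_lt_of_msize_lt {μ ν : Matching I S} (h : msize μ < msize ν) :
    ∃ s, #{i | μ i = some s} < #{i | ν i = some s} := by
  rw [msize_eq_sum, msize_eq_sum] at h
  obtain ⟨s, -, hs⟩ := exists_lt_of_sum_lt h
  exact ⟨s, hs⟩

end Counting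

noncomputable def cyclicShift {n : ℕ} (a : Fin (n + 1) → I) (ha : Function.Injective a) :
    Equiv.Perm I :=
  (finRotate (n + 1)).extendDomain (Equiv.ofInjective a ha)

theorem cyclicShift_apply_self {n : ℕ} {a : Fin (n + 1) → I} (ha : Function.Injective a)
    (k : Fin (n + 1)) : cyclicShift a ha (a k) = a (k + 1) := by
  have := Equiv.Perm.extendDomain_apply_image (finRotate (n + 1)) (Equiv.ofInjective a ha) k
  simpa [cyclicShift, finRotate_apply] using this

theorem cyclicShift_apply_of_forall_ne {n : ℕ} {a : Fin (n + 1) → I} (ha : Function.Injective a)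
    {j : I} (hj : ∀ k, j ≠ a k) : cyclicShift a ha j = j :=
  Equiv.Perm.extendDomain_apply_not_subtype _ _ fun ⟨k, hk⟩ => hj k hk.symm

section Implementation

variable [Fintype I] [DecidableEq S]

/-- The set `ξ` of the first stage of EAM once the students of `K` are guaranteed a seat. -/
def xiSet (P : Prof I S) (q : S → ℕ) (K : Finset I) : Set (Matching I S) :=
  {μ | Feasible q μ ∧ IndivRational P μ ∧ ∀ k ∈ K, μ k ≠ none}

theorem xiSet_anti (P : Prof I S) (q : S → ℕ) : Antitone (xiSet (I := I) P q) :=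
  fun _ _ hKK' _ ⟨hf, hir, hK⟩ => ⟨hf, hir, fun k hk => hK k (hKK' hk)⟩

theorem Feasible.update_some [DecidableEq I] {q : S → ℕ} {μ : Matching I S}
    (hμ : Feasible q μ) {s : S} (hfree : #{j | μ j = some s} < q s) (i : I) :
    Feasible q (Function.update μ i (some s)) := by
  intro x
  by_cases hx : x = s
  · subst hx
    calc #{j | Function.update μ i (some x) j = some x}
        ≤ #(insert i ({j | μ j = some x} : Finset I)) :=
          card_le_card fun j hj => by
            by_cases hji : j = i
            · simp [hji]
            · simpa [hji] using hj
      _ ≤ q x := (card_insert_le _ _).trans hfree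
  · refine le_trans (card_le_card fun j hj => ?_) (hμ x)
    by_cases hji : j = i
    · simp [hji, Ne.symm hx] at hj
    · simpa [hji] using hj

theorem Feasible.update_none [DecidableEq I] {q : S → ℕ} {μ : Matching I S}
    (hμ : Feasible q μ) (i : I) : Feasible q (Function.update μ i none) := by
  refine fun x => le_trans (card_le_card fun j hj => ?_) (hμ x)
  by_cases hji : j = i
  · simp [hji] at hj
  · simpa [hji] using hj

variable {P : Prof I S} {q : S → ℕ} {μ μ' : Matching I S} {n : ℕ} {a : Fin (n + 1) → I}
  {t : Fin (n + 1) → S}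

theorem IsImpChain.feasible_of_implements (hc : IsImpChain P q μ n a t) (hμ : Feasible q μ)
    (hA : ∀ k, μ' (a k) = some (t k)) (hB : ∀ j, (∀ k, j ≠ a k) → μ' j = μ j) :
    Feasible q μ' := by
  obtain ⟨ha, -, hnext, hlast⟩ := hc
  have hshift : ∀ x, #(({j | μ' j = some x} : Finset I).erase (a (Fin.last n)))
      ≤ #{j | μ j = some x} := by
    intro x
    refine card_le_card_of_injOn (cyclicShift a ha) (fun j hj => ?_)
      (cyclicShift a ha).injective.injOn
    simp only [mem_coe, mem_erase, mem_filter, mem_univ, true_and] at hj ⊢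
    rcases em (∃ k, j = a k) with ⟨k, rfl⟩ | hj'
    · obtain ⟨k', rfl⟩ := (Fin.exists_castSucc_eq (i := k)).mpr fun h => hj.1 (congrArg a h)
      rw [cyclicShift_apply_self, Fin.coeSucc_eq_succ, hnext, ← hA, hj.2]
    · have hj' : ∀ k, j ≠ a k := fun k hk => hj' ⟨k, hk⟩
      rw [cyclicShift_apply_of_forall_ne ha hj', ← hB j hj', hj.2]
  intro x
  by_cases hx : x = t (Fin.last n)
  · subst hx
    calc #{j | μ' j = some (t (Fin.last n))}
        ≤ #(({j | μ' j = some (t (Fin.last n))} : Finset I).erase (a (Fin.last n))) + 1 := by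
          have := pred_card_le_card_erase (s := ({j | μ' j = some (t (Fin.last n))} : Finset I))
            (a := a (Fin.last n))
          omega
      _ ≤ q (t (Fin.last n)) := by have := hshift (t (Fin.last n)); omega
  · rw [← erase_eq_of_notMem (s := ({j | μ' j = some x} : Finset I)) (a := a (Fin.last n))
      (by simp [hA, Ne.symm hx])]
    exact (hshift x).trans (hμ x)

theorem IsImpCycle.feasible_of_implements (hc : IsImpCycle P μ n a t) (hμ : Feasible q μ)
    (hA : ∀ k, μ' (a k) = some (t (k + 1))) (hB : ∀ j, (∀ k, j ≠ a k) → μ' j = μ j) :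
    Feasible q μ' := by
  obtain ⟨ha, hat, -⟩ := hc
  refine fun x => le_trans (card_le_card_of_injOn (cyclicShift a ha) (fun j hj => ?_)
    (cyclicShift a ha).injective.injOn) (hμ x)
  simp only [mem_coe, mem_filter, mem_univ, true_and] at hj ⊢
  rcases em (∃ k, j = a k) with ⟨k, rfl⟩ | hj'
  · rw [cyclicShift_apply_self, hat, ← hA, hj]
  · have hj' : ∀ k, j ≠ a k := fun k hk => hj' ⟨k, hk⟩
    rw [cyclicShift_apply_of_forall_ne ha hj', ← hB j hj', hj]

theorem mem_xiSet_of_moves {K : Finset I} {c : Fin (n + 1) → S} (hμ : μ ∈ xiSet P q K)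
    (hμ' : Feasible q μ') (hpref : ∀ k, (P (a k)).1 (μ (a k)) ≤ (P (a k)).1 (some (c k)))
    (hA : ∀ k, μ' (a k) = some (c k)) (hB : ∀ j, (∀ k, j ≠ a k) → μ' j = μ j) :
    μ' ∈ xiSet P q K := by
  obtain ⟨-, hir, hK⟩ := hμ
  have hmoved (j : I) : (P j).1 (μ j) ≤ (P j).1 (μ' j) ∧ (μ j ≠ none → μ' j ≠ none) := by
    rcases em (∃ k, j = a k) with ⟨k, rfl⟩ | hj
    · rw [hA]
      exact ⟨hpref k, fun _ => Option.some_ne_none _⟩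
    · rw [hB j fun k hk => hj ⟨k, hk⟩]
      exact ⟨le_rfl, id⟩
  exact ⟨hμ', fun j => (hir j).trans (hmoved j).1, fun k hk => (hmoved k).2 (hK k hk)⟩

theorem ImplementStep.mem_xiSet {K : Finset I} (h : ImplementStep P q μ μ')
    (hμ : μ ∈ xiSet P q K) : μ' ∈ xiSet P q K := by
  rcases h with ⟨n, a, t, hc, hA, hB⟩ | ⟨n, a, t, hc, hA, hB⟩
  · exact mem_xiSet_of_moves hμ (hc.feasible_of_implements hμ.1 hA hB)
      (fun k => (hc.2.1 k).le) hA hB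
  · refine mem_xiSet_of_moves hμ (hc.feasible_of_implements hμ.1 hA hB) (fun k => ?_) hA hB
    rw [hc.2.1 k]
    exact (hc.2.2 k).le

theorem update_none_mem_xiSet [DecidableEq I] {P Q : Prof I S} {q : S → ℕ} {i : I}
    (hPQ : ∀ j ≠ i, P j = Q j) {K : Finset I} (hiK : i ∉ K)
    {μ : Matching I S} (hμ : μ ∈ xiSet P q K) : Function.update μ i none ∈ xiSet Q q K := by
  obtain ⟨hf, hir, hK⟩ := hμ
  refine ⟨hf.update_none i, fun j => ?_, fun k hk => ?_⟩
  · by_cases hji : j = i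
    · simp [hji]
    · simpa [hji, hPQ j hji] using hir j
  · simpa [show k ≠ i from fun h => hiK (h ▸ hk)] using hK k hk

/-- Only students not yet guaranteed a seat can be unassigned, so whether `j` can be guaranteed
a seat does not depend on the report of such a student `i`. -/
theorem exists_mem_xiSet_ne_none_congr {P Q : Prof I S} {q : S → ℕ} {i : I}
    (hPQ : ∀ j ≠ i, P j = Q j) {K : Finset I} (hiK : i ∉ K)
    {j : I} (hji : j ≠ i) :
    (∃ μ ∈ xiSet P q K, μ j ≠ none) ↔ ∃ μ ∈ xiSet Q q K, μ j ≠ none := by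
  constructor <;> rintro ⟨μ, hμ, hj⟩
  · exact ⟨_, update_none_mem_xiSet hPQ hiK hμ, by simpa [hji] using hj⟩
  · exact ⟨_, update_none_mem_xiSet (fun j hj => (hPQ j hj).symm) hiK hμ,
      by simpa [hji] using hj⟩

end Implementation

section FirstStage

variable [Fintype I] [DecidableEq I] [Fintype S] [DecidableEq S] {q : S → ℕ}

/-- The students guaranteed a seat by the first stage of EAM when it processes `M` after having
guaranteed seats to `K`. -/
noncomputable def xiForced (P : Prof I S) (q : S → ℕ) : Finset I → List I → Finset I
  | K, [] => K
  | K, j :: M => xiForced P q (if ∃ μ ∈ xiSet P q K, μ j ≠ none then insert j K else K) M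

theorem subset_xiForced (P : Prof I S) (M : List I) (K : Finset I) : K ⊆ xiForced P q K M := by
  induction M generalizing K with
  | nil => exact subset_rfl
  | cons j M ih =>
    refine subset_trans ?_ (ih _)
    split_ifs
    exacts [subset_insert j K, subset_rfl]

theorem xiStep_xiSet (P : Prof I S) (K : Finset I) (j : I) :
    xiStep (xiSet P q K) j
      = xiSet P q (if ∃ μ ∈ xiSet P q K, μ j ≠ none then insert j K else K) := by
  unfold xiStep
  split_ifs
  · ext μ
    simp only [xiSet, Set.mem_ofPred_eq, mem_insert, forall_eq_or_imp]
    tauto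
  · rfl

theorem xiList_eq_xiSet (P : Prof I S) (L : List I) :
    xiList P q L = xiSet P q (xiForced P q ∅ L) := by
  have hfold : ∀ K, L.foldl xiStep (xiSet P q K) = xiSet P q (xiForced P q K L) := by
    induction L with
    | nil => exact fun _ => rfl
    | cons j M ih => exact fun K => by rw [List.foldl_cons, xiStep_xiSet, ih]; rfl
  rw [xiList, ← hfold]
  congr
  ext μ
  simp

theorem IsEAMOutcome.mem_xiSet {P : Prof I S} {L : List I} {μ : Matching I S}
    (h : IsEAMOutcome P q L μ) : μ ∈ xiSet P q (xiForced P q ∅ L) := by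
  obtain ⟨μ₀, hμ₀, hsteps, -, -⟩ := h
  rw [xiList_eq_xiSet] at hμ₀
  induction hsteps with
  | refl => exact hμ₀
  | tail _ hstep ih => exact hstep.mem_xiSet ih

variable {P Q : Prof I S} {i : I}

theorem mem_xiForced_of_mem_xiSet (hPQ : ∀ j ≠ i, P j = Q j) {M : List I} (hiM : i ∈ M)
    {K : Finset I} (hiK : i ∉ K) {w : Matching I S} (hw : w ∈ xiSet Q q (xiForced P q K M))
    (hwi : w i ≠ none) : i ∈ xiForced Q q K M := by
  induction M generalizing K with
  | nil => simp at hiM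
  | cons j M ih =>
    by_cases hji : j = i
    · subst hji
      have hseat : ∃ μ ∈ xiSet Q q K, μ j ≠ none :=
        ⟨w, xiSet_anti Q q (subset_xiForced P _ K) hw, hwi⟩
      simp only [xiForced, if_pos hseat]
      exact subset_xiForced Q M _ (mem_insert_self j K)
    · have hiM : i ∈ M := (List.mem_cons.mp hiM).resolve_left fun h => hji h.symm
      simp only [xiForced] at hw ⊢
      by_cases hseat : ∃ μ ∈ xiSet P q K, μ j ≠ none
      · rw [if_pos hseat] at hw
        rw [if_pos ((exists_mem_xiSet_ne_none_congr hPQ hiK hji).mp hseat)]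
        exact ih hiM (by simp [Ne.symm hji, hiK]) hw
      · rw [if_neg hseat] at hw
        rw [if_neg (mt (exists_mem_xiSet_ne_none_congr hPQ hiK hji).mpr hseat)]
        exact ih hiM hiK hw

theorem update_mem_xiSet_acceptOnly {K : Finset I} {μ : Matching I S} (hμ : μ ∈ xiSet P q K)
    {s : S} (hfree : #{j | μ j = some s} < q s) (i : I) :
    Function.update μ i (some s) ∈ xiSet (Function.update P i (IndPref.acceptOnly s)) q K := by
  obtain ⟨hf, hir, hK⟩ := hμ
  refine ⟨hf.update_some hfree i, fun j => ?_, fun k hk => ?_⟩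
  · by_cases hji : j = i
    · simpa [hji] using (IndPref.acceptOnly_none_lt_some s).le
    · simpa [hji] using hir j
  · by_cases hki : k = i
    · simp [hki]
    · simpa [hki] using hK k hk

theorem IsEAMMech.apply_update_acceptOnly {L : List I} {ψ : Mechanism I S}
    (hψ : IsEAMMech q L ψ) (hiL : i ∈ L) {s : S} (hfree : #{j | ψ P j = some s} < q s) :
    ψ (Function.update P i (IndPref.acceptOnly s)) i = some s := by
  set Q := Function.update P i (IndPref.acceptOnly s)
  have hPQ : ∀ j ≠ i, P j = Q j := fun j hj => (Function.update_of_ne hj _ _).symm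
  have hi : i ∈ xiForced Q q ∅ L :=
    mem_xiForced_of_mem_xiSet hPQ hiL (notMem_empty i)
      (update_mem_xiSet_acceptOnly (hψ P).mem_xiSet hfree i) (by simp)
  obtain ⟨-, hir, hforced⟩ := (hψ Q).mem_xiSet
  refine IndPref.eq_of_acceptOnly_none_le (hforced i hi) ?_
  simpa [Q] using hir i

end FirstStage

section Equilibrium

variable [Fintype I] [DecidableEq I] [Fintype S] [DecidableEq S] {q : S → ℕ} {u P : Prof I S}

theorem NashEq.none_le_of_IRMech {φ : Mechanism I S} (h : NashEq u φ P) (hφ : IRMech q φ)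
    (i : I) : (u i).1 none ≤ (u i).1 (φ P i) := by
  have hreject : φ (Function.update P i IndPref.rejectAll) i = none := by
    by_contra hne
    obtain ⟨t, ht⟩ := Option.ne_none_iff_exists'.mp hne
    have hir := (hφ (Function.update P i IndPref.rejectAll)).2 i
    rw [ht, Function.update_self] at hir
    exact (IndPref.rejectAll_some_lt_none t).not_ge hir
  simpa [hreject] using h i IndPref.rejectAll

theorem NashEq.le_of_IsEAMMech {L : List I} {ψ : Mechanism I S} (h : NashEq u ψ P)
    (hψ : IsEAMMech q L ψ) {i : I} (hiL : i ∈ L) {s : S}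
    (hfree : #{j | ψ P j = some s} < q s) :
    (u i).1 (some s) ≤ (u i).1 (ψ P i) := by
  simpa [hψ.apply_update_acceptOnly hiL hfree] using h i (IndPref.acceptOnly s)

end Equilibrium

end Development

variable {I S : Type*} [Fintype I] [DecidableEq I] [Fintype S] [DecidableEq S]

theorem EAM_size_lemma_general
    (q : S → ℕ) (L : List I) (hcomp : ∀ i : I, i ∈ L)
    (ψ φ : Mechanism I S) (hψ : IsEAMMech q L ψ) (hφ : IRMech q φ)
    (u P' P'' : Prof I S)
    (h1 : NashEq u ψ P') (h2 : NashEq u φ P'')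
    (hs : msize (ψ P') < msize (φ P'')) :
    ∃ i : I, (u i).1 (φ P'' i) < (u i).1 (ψ P' i) ∧
      (u i).1 none < (u i).1 (φ P'' i) := by
  obtain ⟨s, hlt⟩ := exists_card_lt_of_msize_lt hs
  have hfree : #{j | ψ P' j = some s} < q s := hlt.trans_le ((hφ P'').1 s)
  obtain ⟨i, hφi, hψi⟩ := exists_mem_notMem_of_card_lt_card hlt
  simp only [mem_filter, mem_univ, true_and] at hφi hψi
  have hacceptable := h2.none_le_of_IRMech hφ i
  have hclaim := h1.le_of_IsEAMMech hψ (hcomp i) hfree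
  rw [hφi] at hacceptable
  refine ⟨i, ?_⟩
  rw [hφi]
  exact ⟨hclaim.lt_of_ne fun h => hψi ((u i).2 h).symm,
    hacceptable.lt_of_ne fun h => Option.some_ne_none s ((u i).2 h).symm⟩

/-- if an individually rational mechanism φ assigns more
students than an EAM mechanism ψ at equilibria P'' and P' respectively,
then some student strictly prefers (truly) their ψ-equilibrium assignment
to their φ-equilibrium assignment, which is itself acceptable. -/
theorem EAM_size_lemma
    (q : S → ℕ) (L : List I) (hnd : L.Nodup) (hcomp : ∀ i : I, i ∈ L)
    (ψ φ : Mechanism I S) (hψ : IsEAMMech q L ψ) (hφ : IRMech q φ)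
    (u P' P'' : Prof I S)
    (h1 : NashEq u ψ P') (h2 : NashEq u φ P'')
    (hs : msize (ψ P') < msize (φ P'')) :
    ∃ i : I, (u i).1 (φ P'' i) < (u i).1 (ψ P' i) ∧
      (u i).1 none < (u i).1 (φ P'' i) :=
  EAM_size_lemma_general q L hcomp ψ φ hψ hφ u P' P'' h1 h2 hs
end
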